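/- arXiv:2501.02638 — 11 statements merged into one kernel-verified Lean document; each statement's English description precedes it below -/
import Mathlib

section
/- Let K be a field, d ≥ 3 an integer, and F ∈ K[x₀,x₁,x₂] a nonzero homogeneous polynomial of degree d. Suppose there exist integers w₀ ≥ w₁ ≥ w₂ with w₀ + w₁ + w₂ = 0 such that every exponent vector (i₀,i₁,i₂) in the support of F satisfies i₀·w₀ + i₁·w₁ + i₂·w₂ > 0. Then at least one of the following holds: (a) x₀^m divides F for some integer m with 3m > d; (b) F lies in the ideal power (x₀,x₁)^m for some integer m with 3m > 2d; (c) letting m be the largest integer such that x₀^m divides F, one has 0 < m, 3m ≤ d, and, writing F = x₀^m·G with x₀ not dividing G, the minimal k such that the monomial x₁^k·x₂^{d−m−k} has nonzero coefficient in G satisfies 2k > d − m; (d) letting m be the largest integer such that F ∈ (x₀,x₁)^m, one has 2m > d, 3m ≤ 2d, and the minimal k such that the monomial x₀^k·x₁^{m−k}·x₂^{d−m} has nonzero coefficient in F satisfies 2k > m. -/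
/-!
Since `w₀ + w₁ + w₂ = 0`, we have `3w = α (2,-1,-1) + β (1,1,-2)` with `α = w₀ - w₁ ≥ 0` and
`β = w₁ - w₂ ≥ 0`, so on an exponent `i` of degree `d` the instability condition reads
`α (3i₀ - d) + β (3(i₀ + i₁) - 2d) > 0`. Let `e` be the lexicographically least exponent of `F`
for `(i₀, i₁)`. If `3e₀ > d` we are in case (a). Otherwise the second term is positive at `e`,
which gives `2e₁ > d - e₀`: this is case (c) when `e₀ > 0`. When `e₀ = 0`, positivity at `e`
forces `α < β`. Let then `j` be the least exponent for `(i₀ + i₁, i₀)`: either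
`3(j₀ + j₁) > 2d`, case (b), or both terms at `j` compare through `α < β` to give
`j₀ + (j₀ + j₁) > d`, which is case (d).
-/

open MvPolynomial

namespace MvPolynomial

variable {σ R : Type*} [CommSemiring R]

theorem X_pow_dvd_iff_le {i : σ} {n : ℕ} {p : MvPolynomial σ R} :
    X i ^ n ∣ p ↔ ∀ x ∈ p.support, n ≤ x i := by
  rw [X_pow_eq_monomial, ← Ideal.mem_span_singleton,
    ← Set.image_singleton (f := fun s => monomial s (1 : R)), mem_ideal_span_monomial_image]
  simp [Finsupp.single_le_iff]

theorem mem_span_X_image_pow_iff {s : Set σ} [DecidablePred (· ∈ s)] {n : ℕ}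
    {p : MvPolynomial σ R} :
    p ∈ Ideal.span (X '' s) ^ n ↔ ∀ x ∈ p.support, n ≤ (x.filter (· ∈ s)).degree := by
  rw [Ideal.span, Submodule.span_pow, Finsupp.image_pow_eq_finsuppProd_image]
  have hprod : (fun x : σ →₀ ℕ => x.prod (X (R := R) · ^ ·)) = (monomial · 1) := by
    ext1 x
    rw [monomial_eq, C_1, one_mul]
  rw [hprod, ← Ideal.span, mem_ideal_span_monomial_image]
  refine forall₂_congr fun x _ => ⟨?_, fun h => ?_⟩
  · rintro ⟨y, ⟨rfl, hys⟩, hyx⟩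
    refine Finsupp.degree_mono fun i => ?_
    by_cases hi : i ∈ s
    · simpa [hi] using hyx i
    · simp [hi, Finsupp.notMem_support_iff.mp (fun h => hi (hys h))]
  · obtain ⟨y, hy, rfl⟩ := Finsupp.exists_le_degree_eq _ _ h
    refine ⟨y, ⟨rfl, fun i hi => ?_⟩, fun i => (hy i).trans ?_⟩
    · by_contra his
      simpa [his] using (Finsupp.mem_support_iff.mp hi).bot_lt.trans_le (hy i)
    · rw [Finsupp.filter_apply]
      split_ifs <;> simp

section Ternary

variable {d : ℕ} {F : MvPolynomial (Fin 3) R}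

theorem single_add_single_add_single (e : Fin 3 →₀ ℕ) :
    Finsupp.single 0 (e 0) + Finsupp.single 1 (e 1) + Finsupp.single 2 (e 2) = e := by
  ext j
  fin_cases j <;> simp

theorem IsHomogeneous.add_add_eq_of_mem_support (hF : F.IsHomogeneous d) {e : Fin 3 →₀ ℕ}
    (he : e ∈ F.support) : e 0 + e 1 + e 2 = d := by
  rw [hF.degree_eq_sum_deg_support he, ← Finsupp.degree_apply, Finsupp.degree_eq_sum,
    Fin.sum_univ_three]

theorem mem_span_X_zero_X_one_pow_iff {n : ℕ} :
    F ∈ Ideal.span {X 0, X 1} ^ n ↔ ∀ e ∈ F.support, n ≤ e 0 + e 1 := by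
  classical
  rw [← Set.image_pair, mem_span_X_image_pow_iff]
  refine forall₂_congr fun e _ => ?_
  rw [Finsupp.degree_eq_sum, Fin.sum_univ_three]
  simp

theorem exists_eq_X_pow_mul_of_forall_toLex_le (hF : F.IsHomogeneous d) {e : Fin 3 →₀ ℕ}
    (he : e ∈ F.support) (hmin : ∀ i ∈ F.support, toLex (e 0, e 1) ≤ toLex (i 0, i 1)) :
    ∃ G, F = X 0 ^ e 0 * G ∧ ¬ X 0 ∣ G ∧
      G.coeff (Finsupp.single 1 (e 1) + Finsupp.single 2 (d - e 0 - e 1)) ≠ 0 ∧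
      ∀ k < e 1, G.coeff (Finsupp.single 1 k + Finsupp.single 2 (d - e 0 - k)) = 0 := by
  obtain ⟨G, rfl⟩ := X_pow_dvd_iff_le.2 fun (i : Fin 3 →₀ ℕ) hi =>
    show e 0 ≤ i 0 from (Prod.Lex.toLex_le_toLex'.1 (hmin i hi)).1
  have hcoeff (j) : G.coeff j = (X 0 ^ e 0 * G).coeff (Finsupp.single 0 (e 0) + j) := by
    rw [X_pow_eq_monomial, coeff_monomial_mul, one_mul]
  refine ⟨G, rfl, ?_, ?_, fun k hk => ?_⟩
  · rintro ⟨H, rfl⟩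
    have := (X_pow_dvd_iff_le (n := e 0 + 1)).1 ⟨H, by ring⟩ e he
    omega
  · have hde := hF.add_add_eq_of_mem_support he
    rw [hcoeff, ← add_assoc, show d - e 0 - e 1 = e 2 by omega, single_add_single_add_single]
    exact mem_support_iff.1 he
  · rw [hcoeff]
    by_contra hne
    exact absurd (hmin _ (mem_support_iff.2 hne)) (by simpa [Prod.Lex.toLex_le_toLex] using hk)

theorem mem_span_pow_and_coeff_of_forall_toLex_le (hF : F.IsHomogeneous d)
    {e : Fin 3 →₀ ℕ} (he : e ∈ F.support)
    (hmin : ∀ i ∈ F.support, toLex (e 0 + e 1, e 0) ≤ toLex (i 0 + i 1, i 0)) :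
    F ∈ Ideal.span {X 0, X 1} ^ (e 0 + e 1) ∧ F ∉ Ideal.span {X 0, X 1} ^ (e 0 + e 1 + 1) ∧
      F.coeff (Finsupp.single 0 (e 0) + Finsupp.single 1 (e 0 + e 1 - e 0) +
        Finsupp.single 2 (d - (e 0 + e 1))) ≠ 0 ∧
      ∀ k < e 0, F.coeff (Finsupp.single 0 k + Finsupp.single 1 (e 0 + e 1 - k) +
        Finsupp.single 2 (d - (e 0 + e 1))) = 0 := by
  have hle (i) (hi : i ∈ F.support) : e 0 + e 1 ≤ i 0 + i 1 :=
    (Prod.Lex.toLex_le_toLex'.1 (hmin i hi)).1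
  refine ⟨mem_span_X_zero_X_one_pow_iff.2 hle, fun hmem => ?_, ?_, fun k hk => ?_⟩
  · have := mem_span_X_zero_X_one_pow_iff.1 hmem e he
    omega
  · have hde := hF.add_add_eq_of_mem_support he
    rw [show e 0 + e 1 - e 0 = e 1 by omega, show d - (e 0 + e 1) = e 2 by omega,
      single_add_single_add_single]
    exact mem_support_iff.1 he
  · by_contra hne
    exact absurd (hmin _ (mem_support_iff.2 hne)) (by
      simpa [Prod.Lex.toLex_le_toLex, Nat.add_sub_cancel' (hk.le.trans le_self_add)] using hk)

theorem three_mul_weight_eq_of_mem_support (hF : F.IsHomogeneous d) {w : Fin 3 → ℤ}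
    (hsum : w 0 + w 1 + w 2 = 0) {i : Fin 3 →₀ ℕ} (hi : i ∈ F.support) :
    3 * ((i 0 : ℤ) * w 0 + (i 1 : ℤ) * w 1 + (i 2 : ℤ) * w 2) =
      (w 0 - w 1) * (3 * i 0 - d) + (w 1 - w 2) * (3 * (i 0 + i 1) - 2 * d) := by
  have hd : ((i 0 + i 1 + i 2 : ℕ) : ℤ) = d := congrArg _ (hF.add_add_eq_of_mem_support hi)
  push_cast at hd
  rw [← hd]
  linear_combination ((i 0 : ℤ) + i 1 + i 2) * hsum

end Ternary

end MvPolynomial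

theorem stmt0_general {K : Type*} [Field K] (d : ℕ)
    (F : MvPolynomial (Fin 3) K) (hF : F ≠ 0) (hhom : F.IsHomogeneous d)
    (w : Fin 3 → ℤ) (hw01 : w 1 ≤ w 0) (hw12 : w 2 ≤ w 1)
    (hsum : w 0 + w 1 + w 2 = 0)
    (hinst : ∀ i ∈ F.support,
      0 < (i 0 : ℤ) * w 0 + (i 1 : ℤ) * w 1 + (i 2 : ℤ) * w 2) :
    -- (a) the line x₀ = 0 is a component of multiplicity m > d/3
    (∃ m : ℕ, d < 3 * m ∧ (X 0 : MvPolynomial (Fin 3) K) ^ m ∣ F) ∨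
    -- (b) the point [0:0:1] has multiplicity m > 2d/3
    (∃ m : ℕ, 2 * d < 3 * m ∧
      F ∈ (Ideal.span {(X 0 : MvPolynomial (Fin 3) K), X 1}) ^ m) ∨
    -- (c) m is the exact multiplicity of the line x₀ = 0, 0 < m, 3m ≤ d, and the
    -- minimal k with x₁^k x₂^(d-m-k) occurring in G (where F = x₀^m G) satisfies 2k > d-m
    (∃ (m k : ℕ) (G : MvPolynomial (Fin 3) K),
      F = X 0 ^ m * G ∧ ¬ (X 0 : MvPolynomial (Fin 3) K) ∣ G ∧
      0 < m ∧ 3 * m ≤ d ∧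
      G.coeff (Finsupp.single 1 k + Finsupp.single 2 (d - m - k)) ≠ 0 ∧
      (∀ k' < k, G.coeff (Finsupp.single 1 k' + Finsupp.single 2 (d - m - k')) = 0) ∧
      d - m < 2 * k) ∨
    -- (d) m is the exact multiplicity of the point [0:0:1], 2m > d, 3m ≤ 2d, and the
    -- minimal k with x₀^k x₁^(m-k) x₂^(d-m) occurring in F satisfies 2k > m
    (∃ m k : ℕ,
      F ∈ (Ideal.span {(X 0 : MvPolynomial (Fin 3) K), X 1}) ^ m ∧
      F ∉ (Ideal.span {(X 0 : MvPolynomial (Fin 3) K), X 1}) ^ (m + 1) ∧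
      d < 2 * m ∧ 3 * m ≤ 2 * d ∧
      F.coeff (Finsupp.single 0 k + Finsupp.single 1 (m - k) + Finsupp.single 2 (d - m)) ≠ 0 ∧
      (∀ k' < k, F.coeff (Finsupp.single 0 k' + Finsupp.single 1 (m - k') +
        Finsupp.single 2 (d - m)) = 0) ∧
      m < 2 * k) := by
  have hα : 0 ≤ w 0 - w 1 := sub_nonneg.2 hw01
  have hβ : 0 ≤ w 1 - w 2 := sub_nonneg.2 hw12
  have key (i) (hi : i ∈ F.support) :
      0 < (w 0 - w 1) * (3 * i 0 - d) + (w 1 - w 2) * (3 * (i 0 + i 1) - 2 * d) := by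
    linarith [hinst i hi, three_mul_weight_eq_of_mem_support hhom hsum hi]
  have hS := support_nonempty.2 hF
  obtain ⟨e, he, hemin⟩ := F.support.exists_min_image (fun i => toLex (i 0, i 1)) hS
  by_cases hline : d < 3 * e 0
  · exact Or.inl ⟨e 0, hline, X_pow_dvd_iff_le.2 fun (i : Fin 3 →₀ ℕ) hi =>
      show e 0 ≤ i 0 from (Prod.Lex.toLex_le_toLex'.1 (hemin i hi)).1⟩
  have hde := hhom.add_add_eq_of_mem_support he
  have he1 : 2 * (d : ℤ) < 3 * (e 0 + e 1) := by
    have : 3 * (e 0 : ℤ) ≤ d := by omega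
    nlinarith [key e he]
  rcases Nat.eq_zero_or_pos (e 0) with he0 | he0
  · have hαβ : w 0 - w 1 < w 1 - w 2 := by
      have := key e he
      rw [he0] at this he1
      push_cast at this he1
      nlinarith
    obtain ⟨j, hj, hjmin⟩ := F.support.exists_min_image (fun i => toLex (i 0 + i 1, i 0)) hS
    by_cases hpoint : 2 * d < 3 * (j 0 + j 1)
    · exact Or.inr <| Or.inl ⟨_, hpoint, mem_span_X_zero_X_one_pow_iff.2 fun i hi =>
        (Prod.Lex.toLex_le_toLex'.1 (hjmin i hi)).1⟩
    have hdj : d < j 0 + (j 0 + j 1) := by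
      have := key j hj
      nlinarith
    obtain ⟨hmem, hnmem, hcoeff, hmin⟩ := mem_span_pow_and_coeff_of_forall_toLex_le hhom hj hjmin
    exact Or.inr <| Or.inr <| Or.inr ⟨_, _, hmem, hnmem, by omega, by omega, hcoeff, hmin, by omega⟩
  · obtain ⟨G, hG, hndvd, hcoeff, hmin⟩ := exists_eq_X_pow_mul_of_forall_toLex_le hhom he hemin
    exact Or.inr <| Or.inr <| Or.inl ⟨_, _, G, hG, hndvd, he0, by omega, hcoeff, hmin, by omega⟩

/-- Proposition 2.4(i) of the paper, stated in the coordinate system realizing the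
instability: if a nonzero homogeneous form `F` of degree `d ≥ 3` in three variables
admits a balanced ordered integral weight vector `w` with `⟨i,w⟩ > 0` for all exponent
vectors `i` in the support of `F`, then one of the four configurations (a)-(d) holds. -/
theorem stmt0 {K : Type*} [Field K] (d : ℕ) (hd : 3 ≤ d)
    (F : MvPolynomial (Fin 3) K) (hF : F ≠ 0) (hhom : F.IsHomogeneous d)
    (w : Fin 3 → ℤ) (hw01 : w 1 ≤ w 0) (hw12 : w 2 ≤ w 1)
    (hsum : w 0 + w 1 + w 2 = 0)
    (hinst : ∀ i ∈ F.support,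
      0 < (i 0 : ℤ) * w 0 + (i 1 : ℤ) * w 1 + (i 2 : ℤ) * w 2) :
    -- (a) the line x₀ = 0 is a component of multiplicity m > d/3
    (∃ m : ℕ, d < 3 * m ∧ (X 0 : MvPolynomial (Fin 3) K) ^ m ∣ F) ∨
    -- (b) the point [0:0:1] has multiplicity m > 2d/3
    (∃ m : ℕ, 2 * d < 3 * m ∧
      F ∈ (Ideal.span {(X 0 : MvPolynomial (Fin 3) K), X 1}) ^ m) ∨
    -- (c) m is the exact multiplicity of the line x₀ = 0, 0 < m, 3m ≤ d, and the
    -- minimal k with x₁^k x₂^(d-m-k) occurring in G (where F = x₀^m G) satisfies 2k > d-m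
    (∃ (m k : ℕ) (G : MvPolynomial (Fin 3) K),
      F = X 0 ^ m * G ∧ ¬ (X 0 : MvPolynomial (Fin 3) K) ∣ G ∧
      0 < m ∧ 3 * m ≤ d ∧
      G.coeff (Finsupp.single 1 k + Finsupp.single 2 (d - m - k)) ≠ 0 ∧
      (∀ k' < k, G.coeff (Finsupp.single 1 k' + Finsupp.single 2 (d - m - k')) = 0) ∧
      d - m < 2 * k) ∨
    -- (d) m is the exact multiplicity of the point [0:0:1], 2m > d, 3m ≤ 2d, and the
    -- minimal k with x₀^k x₁^(m-k) x₂^(d-m) occurring in F satisfies 2k > m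
    (∃ m k : ℕ,
      F ∈ (Ideal.span {(X 0 : MvPolynomial (Fin 3) K), X 1}) ^ m ∧
      F ∉ (Ideal.span {(X 0 : MvPolynomial (Fin 3) K), X 1}) ^ (m + 1) ∧
      d < 2 * m ∧ 3 * m ≤ 2 * d ∧
      F.coeff (Finsupp.single 0 k + Finsupp.single 1 (m - k) + Finsupp.single 2 (d - m)) ≠ 0 ∧
      (∀ k' < k, F.coeff (Finsupp.single 0 k' + Finsupp.single 1 (m - k') +
        Finsupp.single 2 (d - m)) = 0) ∧
      m < 2 * k) :=
  stmt0_general d F hF hhom w hw01 hw12 hsum hinst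
end

section
/- Let d, m, k, w₀, w₁, w₂ be integers satisfying d ≥ 1, w₀ > w₁ > w₂, w₀ + w₁ + w₂ = 0, w₁ > 0, 0 ≤ k ≤ m ≤ d, 3m ≤ 2d, and k·w₀ + (m − k)·w₁ + (d − m)·w₂ > 0. Then 2m > d and 2k > m. -/
/-- Arithmetic core of Case (d) in the proof of Proposition 2.4(i). -/
theorem stmt4 (d m k w0 w1 w2 : ℤ) (hd : 1 ≤ d)
    (h01 : w1 < w0) (h12 : w2 < w1) (hsum : w0 + w1 + w2 = 0)
    (hw1 : 0 < w1) (hk0 : 0 ≤ k) (hkm : k ≤ m) (hmd : m ≤ d)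
    (h3m : 3 * m ≤ 2 * d)
    (hpos : 0 < k * w0 + (m - k) * w1 + (d - m) * w2) :
    d < 2 * m ∧ m < 2 * k := by
  have hw2 : w2 = -w0 - w1 := by linarith
  subst hw2
  have hkey : 0 < (k + m - d) * w0 + (2 * m - k - d) * w1 := by nlinarith [hpos]
  constructor
  · by_contra h
    push_neg at h
    have hw0 : 0 ≤ w0 := by linarith
    nlinarith [mul_nonneg (show 0 ≤ d - m - k by linarith) hw0,
      mul_nonneg (show 0 ≤ d + k - 2 * m by linarith) hw1.le]
  · by_contra h
    push_neg at h
    have h1 : k + m - d ≤ 0 := by linarith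
    nlinarith [mul_le_mul_of_nonpos_left h01.le h1]
end

section
/- Fix integers n ≥ 1 and d ≥ 3, and let I_d := {i : Fin (n+1) → ℕ | ∑_j i_j = d}. For i ∈ I_d define the linear form l_i : ℝ^{n+1} → ℝ by l_i(w) := (d/(n+1))·(∑_j w_j) − ∑_j i_j·w_j. Then there exist a natural number N, a positive integer e, and nonnegative integers e_{i,k} for i ∈ I_d and k ∈ {1,…,N}, such that: (i) for every tuple (t_i)_{i ∈ I_d} of real numbers, there exists w ∈ ℝ^{n+1} with t_i ≥ l_i(w) for all i ∈ I_d if and only if ∑_{i ∈ I_d} e_{i,k}·t_i ≥ 0 for every k = 1,…,N; and (ii) ∑_{i ∈ I_d} e_{i,k} = e for every k = 1,…,N. -/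
section
variable {ι : Type} [Fintype ι]

theorem step_equiv (m : ℕ) (A : ι → Fin (m+1) → ℚ) (t : ι → ℝ) :
    (∃ w : Fin (m+1) → ℝ, ∀ r, ∑ j, (A r j : ℝ) * w j ≤ t r) ↔
    (∃ w' : Fin m → ℝ,
      (∀ r : {r : ι // A r (Fin.last m) = 0},
          ∑ j, (A r.1 (Fin.castSucc j) : ℝ) * w' j ≤ t r.1) ∧
      (∀ p : {p : ι // 0 < A p (Fin.last m)}, ∀ q : {q : ι // A q (Fin.last m) < 0},
          ∑ j, ((A p.1 (Fin.castSucc j) / A p.1 (Fin.last m)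
               - A q.1 (Fin.castSucc j) / A q.1 (Fin.last m) : ℚ) : ℝ) * w' j
            ≤ t p.1 / (A p.1 (Fin.last m) : ℝ) - t q.1 / (A q.1 (Fin.last m) : ℝ))) := by
  classical
  have hsum : ∀ (w' : Fin m → ℝ) (p q : ι),
      ∑ j, ((A p (Fin.castSucc j) / A p (Fin.last m)
           - A q (Fin.castSucc j) / A q (Fin.last m) : ℚ) : ℝ) * w' j
      = (∑ j, (A p (Fin.castSucc j) : ℝ) * w' j) / (A p (Fin.last m) : ℝ)
        - (∑ j, (A q (Fin.castSucc j) : ℝ) * w' j) / (A q (Fin.last m) : ℝ) := by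
    intro w' p q
    rw [Finset.sum_div, Finset.sum_div, ← Finset.sum_sub_distrib]
    congr 1; funext j
    push_cast
    ring
  constructor
  · rintro ⟨w, hw⟩
    refine ⟨fun j => w (Fin.castSucc j), fun r => ?_, fun p q => ?_⟩
    · have h := hw r.1
      rw [Fin.sum_univ_castSucc] at h
      have hz : (A r.1 (Fin.last m) : ℝ) = 0 := by exact_mod_cast r.2
      rw [hz] at h
      linarith [h]
    · have hp := hw p.1
      have hq := hw q.1
      rw [Fin.sum_univ_castSucc] at hp hq
      have hap : (0:ℝ) < (A p.1 (Fin.last m) : ℝ) := by exact_mod_cast p.2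
      have haq : (A q.1 (Fin.last m) : ℝ) < 0 := by exact_mod_cast q.2
      rw [hsum]
      have h1 := (div_le_div_iff_of_pos_right hap).2 hp
      have h2 := (div_le_div_right_of_neg haq).2 hq
      rw [add_div, mul_div_cancel_left₀ _ hap.ne'] at h1
      rw [add_div, mul_div_cancel_left₀ _ haq.ne] at h2
      linarith
  · rintro ⟨w', hzero, hpair⟩
    set S : ι → ℝ := fun r => ∑ j, (A r (Fin.castSucc j) : ℝ) * w' j with hS
    -- bounds
    have key : ∀ p : {p : ι // 0 < A p (Fin.last m)}, ∀ q : {q : ι // A q (Fin.last m) < 0},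
        (t q.1 - S q.1) / (A q.1 (Fin.last m) : ℝ)
          ≤ (t p.1 - S p.1) / (A p.1 (Fin.last m) : ℝ) := by
      intro p q
      have h := hpair p q
      rw [hsum] at h
      rw [sub_div, sub_div]
      linarith
    -- choose x
    obtain ⟨x, hxlow, hxhigh⟩ : ∃ x : ℝ,
        (∀ q : {q : ι // A q (Fin.last m) < 0},
          (t q.1 - S q.1) / (A q.1 (Fin.last m) : ℝ) ≤ x) ∧
        (∀ p : {p : ι // 0 < A p (Fin.last m)},
          x ≤ (t p.1 - S p.1) / (A p.1 (Fin.last m) : ℝ)) := by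
      by_cases hQ : Nonempty {q : ι // A q (Fin.last m) < 0}
      · have hne : (Finset.univ : Finset {q : ι // A q (Fin.last m) < 0}).Nonempty :=
          Finset.univ_nonempty
        refine ⟨Finset.univ.sup' hne (fun q => (t q.1 - S q.1) / (A q.1 (Fin.last m) : ℝ)),
          fun q => Finset.le_sup' (fun q : {q : ι // A q (Fin.last m) < 0} =>
            (t q.1 - S q.1) / (A q.1 (Fin.last m) : ℝ)) (Finset.mem_univ q), fun p => ?_⟩
        exact Finset.sup'_le hne _ (fun q _ => key p q)
      · by_cases hP : Nonempty {p : ι // 0 < A p (Fin.last m)}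
        · have hne : (Finset.univ : Finset {p : ι // 0 < A p (Fin.last m)}).Nonempty :=
            Finset.univ_nonempty
          exact ⟨Finset.univ.inf' hne (fun p => (t p.1 - S p.1) / (A p.1 (Fin.last m) : ℝ)),
            fun q => absurd ⟨q⟩ hQ, fun p => Finset.inf'_le _ (Finset.mem_univ p)⟩
        · exact ⟨0, fun q => absurd ⟨q⟩ hQ, fun p => absurd ⟨p⟩ hP⟩
    refine ⟨Fin.snoc w' x, fun r => ?_⟩
    rw [Fin.sum_univ_castSucc]
    have hcast : ∀ j : Fin m, (Fin.snoc w' x : Fin (m+1) → ℝ) (Fin.castSucc j) = w' j := by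
      intro j; simp [Fin.snoc_castSucc]
    have hlast : (Fin.snoc w' x : Fin (m+1) → ℝ) (Fin.last m) = x := by simp
    simp only [hcast, hlast]
    rcases lt_trichotomy (A r (Fin.last m)) 0 with hneg | hz | hpos
    · have haq : (A r (Fin.last m) : ℝ) < 0 := by exact_mod_cast hneg
      have h1 : (t r - S r) / (A r (Fin.last m) : ℝ) ≤ x := hxlow ⟨r, hneg⟩
      have h2 : (A r (Fin.last m) : ℝ) * x ≤ t r - S r := by
        have h3 := (div_le_iff_of_neg haq).1 h1
        linarith [mul_comm x ((A r (Fin.last m) : ℝ))]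
      have h4 : S r = ∑ j, (A r (Fin.castSucc j) : ℝ) * w' j := rfl
      linarith
    · have : (A r (Fin.last m) : ℝ) = 0 := by exact_mod_cast hz
      rw [this]
      have h1 : ∑ j, (A r (Fin.castSucc j) : ℝ) * w' j ≤ t r := hzero ⟨r, hz⟩
      linarith
    · have hap : (0:ℝ) < (A r (Fin.last m) : ℝ) := by exact_mod_cast hpos
      have h1 : x ≤ (t r - S r) / (A r (Fin.last m) : ℝ) := hxhigh ⟨r, hpos⟩
      have h2 : (A r (Fin.last m) : ℝ) * x ≤ t r - S r := by
        rw [← le_div_iff₀' hap]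
        exact h1
      have h4 : S r = ∑ j, (A r (Fin.castSucc j) : ℝ) * w' j := rfl
      linarith
end

theorem myFM (m : ℕ) : ∀ (ι : Type) [Fintype ι] (A : ι → Fin m → ℚ),
    ∃ (N : ℕ) (L : Fin N → ι → ℚ),
      (∀ k r, 0 ≤ L k r) ∧
      (∀ t : ι → ℝ,
        (∃ w : Fin m → ℝ, ∀ r, ∑ j, (A r j : ℝ) * w j ≤ t r) ↔
        ∀ k, 0 ≤ ∑ r, (L k r : ℝ) * t r) := by
  induction m with
  | zero =>
    intro ι _ A
    classical
    refine ⟨Fintype.card ι, fun k r => if r = (Fintype.equivFin ι).symm k then 1 else 0,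
      fun k r => by positivity, fun t => ?_⟩
    constructor
    · intro ⟨w, hw⟩ k
      have := hw ((Fintype.equivFin ι).symm k)
      simp only [Finset.univ_eq_empty, Finset.sum_empty] at this
      calc (0:ℝ) ≤ t ((Fintype.equivFin ι).symm k) := this
        _ = ∑ r, (((if r = (Fintype.equivFin ι).symm k then (1:ℚ) else 0) : ℚ) : ℝ) * t r := by
            simp [apply_ite, ite_mul]
    · intro h
      refine ⟨fun j => 0, fun r => ?_⟩
      have := h (Fintype.equivFin ι r)
      simp only [Equiv.symm_apply_apply] at this
      simpa [apply_ite, ite_mul] using this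
  | succ m ih =>
    intro ι _ A
    classical
    obtain ⟨N, L', hL'pos, hL'iff⟩ := ih
      ({r : ι // A r (Fin.last m) = 0} ⊕
        ({p : ι // 0 < A p (Fin.last m)} × {q : ι // A q (Fin.last m) < 0}))
      (Sum.elim (fun r j => A r.1 (Fin.castSucc j))
        (fun pq j => A pq.1.1 (Fin.castSucc j) / A pq.1.1 (Fin.last m)
                   - A pq.2.1 (Fin.castSucc j) / A pq.2.1 (Fin.last m)))
    set c : ({r : ι // A r (Fin.last m) = 0} ⊕
        ({p : ι // 0 < A p (Fin.last m)} × {q : ι // A q (Fin.last m) < 0})) → ι → ℚ :=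
      Sum.elim (fun r0 r => if r = r0.1 then 1 else 0)
        (fun pq r => (if r = pq.1.1 then 1 / A pq.1.1 (Fin.last m) else 0) +
                     (if r = pq.2.1 then -(1 / A pq.2.1 (Fin.last m)) else 0)) with hc
    have hcpos : ∀ s r, 0 ≤ c s r := by
      rintro (r0 | pq) r
      · simp only [hc, Sum.elim_inl]
        split <;> norm_num
      · simp only [hc, Sum.elim_inr]
        refine add_nonneg ?_ ?_
        · split
          · exact (one_div_pos.2 pq.1.2).le
          · exact le_refl 0
        · split
          · rw [neg_nonneg]
            exact (one_div_neg.2 pq.2.2).le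
          · exact le_refl 0
    have hct : ∀ s (t : ι → ℝ), ∑ r, (c s r : ℝ) * t r =
        Sum.elim (fun r0 : {r : ι // A r (Fin.last m) = 0} => t r0.1)
          (fun pq : {p : ι // 0 < A p (Fin.last m)} × {q : ι // A q (Fin.last m) < 0} =>
            t pq.1.1 / (A pq.1.1 (Fin.last m) : ℝ) - t pq.2.1 / (A pq.2.1 (Fin.last m) : ℝ)) s := by
      rintro (r0 | pq) t
      · simp [hc, apply_ite (((↑·) : ℚ → ℝ)), ite_mul, Finset.sum_ite_eq']
      · have hpq : pq.1.1 ≠ pq.2.1 := by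
          intro h
          have := pq.1.2
          rw [h] at this
          exact absurd pq.2.2 (not_lt.2 this.le)
        simp only [hc, Sum.elim_inr, Rat.cast_add, Rat.cast_neg, apply_ite (((↑·) : ℚ → ℝ)),
          Rat.cast_div, Rat.cast_one, Rat.cast_zero, Rat.cast_neg, add_mul, neg_mul, ite_mul,
          zero_mul, Finset.sum_add_distrib, Finset.sum_neg_distrib]
        rw [Finset.sum_ite_eq' Finset.univ pq.1.1 (fun r => 1 / (A pq.1.1 (Fin.last m) : ℝ) * t r)]
        rw [Finset.sum_ite_eq' Finset.univ pq.2.1 (fun r => -(1 / (A pq.2.1 (Fin.last m) : ℝ) * t r))]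
        simp only [Finset.mem_univ, if_true]
        field_simp
        ring
    refine ⟨N, fun k r => ∑ s, L' k s * c s r, fun k r =>
      Finset.sum_nonneg fun s _ => mul_nonneg (hL'pos k s) (hcpos s r), fun t => ?_⟩
    have hLsum : ∀ k, ∑ r, ((∑ s, L' k s * c s r : ℚ) : ℝ) * t r =
        ∑ s, (L' k s : ℝ) * ∑ r, (c s r : ℝ) * t r := by
      intro k
      have h1 : ∀ r : ι, ((∑ s, L' k s * c s r : ℚ) : ℝ) * t r
          = ∑ s, (L' k s : ℝ) * ((c s r : ℝ) * t r) := by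
        intro r
        push_cast
        rw [Finset.sum_mul]
        exact Finset.sum_congr rfl fun s _ => mul_assoc _ _ _
      rw [Finset.sum_congr rfl fun r _ => h1 r, Finset.sum_comm]
      exact Finset.sum_congr rfl fun s _ => (Finset.mul_sum _ _ _).symm
    set T : ({r : ι // A r (Fin.last m) = 0} ⊕
        ({p : ι // 0 < A p (Fin.last m)} × {q : ι // A q (Fin.last m) < 0})) → ℝ :=
      Sum.elim (fun r0 : {r : ι // A r (Fin.last m) = 0} => t r0.1)
          (fun pq : {p : ι // 0 < A p (Fin.last m)} × {q : ι // A q (Fin.last m) < 0} =>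
            t pq.1.1 / (A pq.1.1 (Fin.last m) : ℝ) - t pq.2.1 / (A pq.2.1 (Fin.last m) : ℝ)) with hT
    have hTs : ∀ k, ∑ r, ((∑ s, L' k s * c s r : ℚ) : ℝ) * t r = ∑ s, (L' k s : ℝ) * T s := by
      intro k
      rw [hLsum k]
      exact Finset.sum_congr rfl fun s _ => by rw [hct s t, hT]
    have h2 := hL'iff T
    rw [step_equiv m A t]
    constructor
    · rintro ⟨w', hz, hp⟩ k
      rw [hTs k]
      refine h2.1 ⟨w', ?_⟩ k
      rintro (r0 | pq)
      · simpa [hT] using hz r0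
      · simpa [hT] using hp pq.1 pq.2
    · intro h
      obtain ⟨w', hw'⟩ := h2.2 (fun k => by rw [← hTs k]; exact h k)
      exact ⟨w', fun r0 => by simpa [hT] using hw' (Sum.inl r0),
        fun p q => by simpa [hT] using hw' (Sum.inr (p, q))⟩

theorem ratscale (q : ℚ) (e : ℕ) (hq : 0 ≤ q) (hd : q.den ∣ e) :
    ((e / q.den * q.num.toNat : ℕ) : ℚ) = e * q := by
  have h1 : ((e / q.den : ℕ) : ℚ) = (e : ℚ) / (q.den : ℚ) :=
    Nat.cast_div hd (by exact_mod_cast q.den_nz)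
  have h2 : ((q.num.toNat : ℕ) : ℚ) = (q.num : ℚ) := by
    exact_mod_cast Int.toNat_of_nonneg (Rat.num_nonneg.2 hq)
  push_cast [h1, h2]
  rw [div_mul_eq_mul_div, mul_div_assoc, Rat.num_div_den]

set_option maxHeartbeats 2000000 in
/-- Lemma 5.2 of the paper: the projection to the `t`-coordinates of the rational
polyhedron `{(t,w) : t_i ≥ l_i(w) for all i ∈ I_d}`, where
`l_i(w) = (d/(n+1))·(∑ w_j) − ∑ i_j·w_j`, is cut out by finitely many homogeneous
linear inequalities with nonnegative integer coefficients `e_{i,k}` whose coefficient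
sums `∑_i e_{i,k}` all equal a common positive integer `e`. -/
theorem stmt5 (n d : ℕ) (hn : 1 ≤ n) (hd : 3 ≤ d) :
    ∃ (N : ℕ) (e : ℕ) (E : (Fin (n+1) → ℕ) → Fin N → ℕ),
      0 < e ∧
      (∀ t : (Fin (n+1) → ℕ) → ℝ,
        ((∃ w : Fin (n+1) → ℝ, ∀ i : Fin (n+1) → ℕ, (∑ j, i j) = d →
            ((d : ℝ) / (n+1)) * (∑ j, w j) - (∑ j, (i j : ℝ) * w j) ≤ t i) ↔
          (∀ k : Fin N,
            0 ≤ ∑ i ∈ (Fintype.piFinset fun _ : Fin (n+1) => Finset.range (d+1)).filter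
                (fun i => (∑ j, i j) = d), (E i k : ℝ) * t i))) ∧
      (∀ k : Fin N,
        (∑ i ∈ (Fintype.piFinset fun _ : Fin (n+1) => Finset.range (d+1)).filter
            (fun i => (∑ j, i j) = d), E i k) = e) := by
  classical
  set S : Finset (Fin (n+1) → ℕ) :=
    (Fintype.piFinset fun _ : Fin (n+1) => Finset.range (d+1)).filter
      (fun i => (∑ j, i j) = d) with hS
  have hmem : ∀ i : Fin (n+1) → ℕ, i ∈ S ↔ (∑ j, i j) = d := by
    intro i
    simp only [hS, Finset.mem_filter, Fintype.mem_piFinset, Finset.mem_range]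
    constructor
    · rintro ⟨-, h⟩; exact h
    · intro h
      refine ⟨fun j => ?_, h⟩
      have : i j ≤ ∑ j', i j' := Finset.single_le_sum (fun _ _ => Nat.zero_le _) (Finset.mem_univ j)
      omega
  obtain ⟨N₀, L, hLpos, hLiff⟩ := myFM (n+1) {i // i ∈ S}
    (fun r j => (d : ℚ) / ((n : ℚ) + 1) - (r.1 j : ℚ))
  set K : Finset (Fin N₀) := Finset.univ.filter (fun k => L k ≠ 0) with hK
  set g : Fin K.card → Fin N₀ := fun k => ((K.orderIsoOfFin rfl) k).1 with hg
  have hgK : ∀ k, g k ∈ K := fun k => ((K.orderIsoOfFin rfl) k).2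
  have hgsurj : ∀ k0 ∈ K, ∃ k, g k = k0 := by
    intro k0 hk0
    exact ⟨(K.orderIsoOfFin rfl).symm ⟨k0, hk0⟩,
      congrArg Subtype.val ((K.orderIsoOfFin rfl).apply_symm_apply ⟨k0, hk0⟩)⟩
  -- positivity of row sums
  have hspos : ∀ k : Fin K.card, 0 < ∑ r, L (g k) r := by
    intro k
    have hne : L (g k) ≠ 0 := (Finset.mem_filter.1 (hgK k)).2
    have : ∃ r, L (g k) r ≠ 0 := by
      by_contra h
      push_neg at h
      exact hne (funext h)
    obtain ⟨r0, hr0⟩ := this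
    exact Finset.sum_pos' (fun r _ => hLpos _ r)
      ⟨r0, Finset.mem_univ r0, lt_of_le_of_ne (hLpos _ r0) (Ne.symm hr0)⟩
  set μ : Fin K.card → {i // i ∈ S} → ℚ := fun k r => L (g k) r / (∑ r', L (g k) r') with hμ
  have hμpos : ∀ k r, 0 ≤ μ k r := fun k r => div_nonneg (hLpos _ r) (hspos k).le
  have hμsum : ∀ k, ∑ r, μ k r = 1 := by
    intro k
    rw [hμ]
    rw [← Finset.sum_div]
    exact div_self (hspos k).ne'
  set e : ℕ := ∏ k : Fin K.card, ∏ r : {i // i ∈ S}, (μ k r).den with he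
  have hepos : 0 < e := by
    rw [he]
    exact Finset.prod_pos fun k _ => Finset.prod_pos fun r _ => (μ k r).pos
  have hdvd : ∀ k r, (μ k r).den ∣ e := by
    intro k r
    rw [he]
    exact dvd_trans (Finset.dvd_prod_of_mem (fun r' => (μ k r').den) (Finset.mem_univ r))
      (Finset.dvd_prod_of_mem (fun k' => ∏ r' : {i // i ∈ S}, (μ k' r').den) (Finset.mem_univ k))
  refine ⟨K.card, e, fun i k => if h : i ∈ S then (e / (μ k ⟨i, h⟩).den) * (μ k ⟨i, h⟩).num.toNat
    else 0, hepos, ?_, ?_⟩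
  · -- the equivalence
    intro t
    -- rewrite system
    have hsys : (∃ w : Fin (n+1) → ℝ, ∀ i : Fin (n+1) → ℕ, (∑ j, i j) = d →
          ((d : ℝ) / (n+1)) * (∑ j, w j) - (∑ j, (i j : ℝ) * w j) ≤ t i) ↔
        (∃ w : Fin (n+1) → ℝ, ∀ r : {i // i ∈ S},
          ∑ j, (((d : ℚ) / ((n : ℚ) + 1) - (r.1 j : ℚ) : ℚ) : ℝ) * w j ≤ t r.1) := by
      have hrow : ∀ (w : Fin (n+1) → ℝ) (i : Fin (n+1) → ℕ),
          ∑ j, (((d : ℚ) / ((n : ℚ) + 1) - (i j : ℚ) : ℚ) : ℝ) * w j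
            = ((d : ℝ) / (n+1)) * (∑ j, w j) - (∑ j, (i j : ℝ) * w j) := by
        intro w i
        rw [Finset.mul_sum, ← Finset.sum_sub_distrib]
        refine Finset.sum_congr rfl fun j _ => ?_
        push_cast
        ring
      constructor
      · rintro ⟨w, hw⟩
        exact ⟨w, fun r => by rw [hrow]; exact hw r.1 ((hmem r.1).1 r.2)⟩
      · rintro ⟨w, hw⟩
        refine ⟨w, fun i hi => ?_⟩
        have := hw ⟨i, (hmem i).2 hi⟩
        rwa [hrow] at this
    rw [hsys, hLiff (fun r => t r.1)]
    -- relate coefficient sums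
    have hcoef : ∀ (k : Fin K.card) (r : {i // i ∈ S}),
        ((if h : r.1 ∈ S then (e / (μ k ⟨r.1, h⟩).den) * (μ k ⟨r.1, h⟩).num.toNat else 0 : ℕ) : ℝ)
          = (e : ℝ) * (μ k r : ℝ) := by
      intro k r
      rw [dif_pos r.2]
      have := ratscale (μ k ⟨r.1, r.2⟩) e (hμpos k _) (hdvd k _)
      have h2 : (((e / (μ k ⟨r.1, r.2⟩).den) * (μ k ⟨r.1, r.2⟩).num.toNat : ℕ) : ℝ)
          = (((e : ℚ) * μ k ⟨r.1, r.2⟩ : ℚ) : ℝ) := by exact_mod_cast congrArg (fun q : ℚ => (q : ℝ)) this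
      rw [h2]
      push_cast
      ring_nf
    have hsumE : ∀ k : Fin K.card, ∑ i ∈ S, ((if h : i ∈ S then (e / (μ k ⟨i, h⟩).den) *
        (μ k ⟨i, h⟩).num.toNat else 0 : ℕ) : ℝ) * t i
          = ((e : ℝ) / (∑ r', L (g k) r' : ℚ)) * ∑ r, (L (g k) r : ℝ) * t r.1 := by
      intro k
      rw [← Finset.sum_coe_sort S]
      rw [Finset.mul_sum]
      refine Finset.sum_congr rfl fun r _ => ?_
      rw [hcoef k r]
      rw [hμ]
      push_cast
      have hs' : ((∑ r', L (g k) r' : ℚ) : ℝ) ≠ 0 := by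
        exact_mod_cast (hspos k).ne'
      field_simp
    constructor
    · intro h k
      rw [hsumE k]
      have hs : (0:ℝ) < ((∑ r', L (g k) r' : ℚ) : ℝ) := by exact_mod_cast hspos k
      have h1 := h (g k)
      have h2 : (0:ℝ) ≤ (e : ℝ) / ((∑ r', L (g k) r' : ℚ) : ℝ) := by positivity
      exact mul_nonneg h2 h1
    · intro h k0
      by_cases h0 : L k0 = 0
      · simp [h0]
      · obtain ⟨k, hk⟩ := hgsurj k0 (Finset.mem_filter.2 ⟨Finset.mem_univ _, h0⟩)
        have := h k
        rw [hsumE k] at this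
        have hs : (0:ℝ) < ((∑ r', L (g k) r' : ℚ) : ℝ) := by exact_mod_cast hspos k
        have hepos' : (0:ℝ) < (e : ℝ) := by exact_mod_cast hepos
        have hc : (0:ℝ) < (e : ℝ) / ((∑ r', L (g k) r' : ℚ) : ℝ) := div_pos hepos' hs
        have hX : (0:ℝ) ≤ ∑ r, (L (g k) r : ℝ) * t r.1 := by
          by_contra hneg
          push_neg at hneg
          exact absurd this (not_le.2 (mul_neg_of_pos_of_neg hc hneg))
        rw [← hk]
        exact hX
  · -- sums equal e
    intro k
    have : ((∑ i ∈ S, (if h : i ∈ S then (e / (μ k ⟨i, h⟩).den) * (μ k ⟨i, h⟩).num.toNat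
        else 0 : ℕ) : ℕ) : ℚ) = (e : ℚ) := by
      push_cast
      rw [← Finset.sum_coe_sort S]
      have : ∀ r : {i // i ∈ S}, ((if h : r.1 ∈ S then (e / (μ k ⟨r.1, h⟩).den) *
          (μ k ⟨r.1, h⟩).num.toNat else 0 : ℕ) : ℚ) = (e : ℚ) * μ k r := by
        intro r
        rw [dif_pos r.2]
        exact ratscale (μ k ⟨r.1, r.2⟩) e (hμpos k _) (hdvd k _)
      rw [Finset.sum_congr rfl fun r _ => this r, ← Finset.mul_sum, hμsum k, mul_one]
    exact_mod_cast this
end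

section
/- Let K be a field equipped with an additive valuation v : K → ℝ ∪ {∞} (meaning v(a) = ∞ if and only if a = 0, v(ab) = v(a) + v(b), and v(a+b) ≥ min(v(a), v(b))). Let n ≥ 0 and w : Fin (n+1) → ℝ. Then for every invertible (n+1)×(n+1) matrix g over K one has ∑_i min_j (v(g_{ij}) + w_j) ≤ ∑_j w_j + v(det g), with equality when g is the identity matrix. Consequently, the supremum over all invertible matrices g of the quantity ∑_i min_j (v(g_{ij}) + w_j) − v(det g) equals ∑_j w_j. -/
/-!
Expanding `det g` by the Leibniz formula and using the ultrametric inequality, some permutation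
`σ` has `∑ i, v (g (σ i) i) ≤ v (det g)`, the sign contributing `v (±1) = 0`. Reindexing the
rows by `σ` and bounding each row minimum by its entry in column `i` gives the inequality. For
`g = 1` every row minimum is `w i`, since the off-diagonal entries have value `⊤`, so the bound
is attained and is the supremum.
-/

open Matrix

namespace ERealValuation

variable {K : Type*} [Field K] {v : K → EReal}
    (htop : ∀ a : K, v a = ⊤ ↔ a = 0)
    (hbot : ∀ a : K, v a ≠ ⊥)
    (hmul : ∀ a b : K, v (a * b) = v a + v b)
    (hadd : ∀ a b : K, min (v a) (v b) ≤ v (a + b))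

include htop hbot in
lemma exists_real_eq_of_ne_zero {a : K} (ha : a ≠ 0) : ∃ r : ℝ, v a = r :=
  ⟨(v a).toReal, (EReal.coe_toReal (mt (htop a).1 ha) (hbot a)).symm⟩

include htop hbot hmul in
lemma map_one_eq_zero : v 1 = 0 := by
  obtain ⟨r, hr⟩ := exists_real_eq_of_ne_zero htop hbot one_ne_zero
  have h : (r : EReal) = r + r := by rw [← hr, ← hmul, one_mul]
  have : r = r + r := by exact_mod_cast h
  rw [hr, show r = 0 by linarith, EReal.coe_zero]

include htop hbot hmul in
lemma map_eq_zero_of_mul_self_eq_one {a : K} (h : a * a = 1) : v a = 0 := by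
  obtain ⟨r, hr⟩ := exists_real_eq_of_ne_zero htop hbot (left_ne_zero_of_mul_eq_one h)
  have h' : (r : EReal) + r = 0 := by rw [← hr, ← hmul, h, map_one_eq_zero htop hbot hmul]
  have : r + r = 0 := by exact_mod_cast h'
  rw [hr, show r = 0 by linarith, EReal.coe_zero]

include htop hbot hmul in
lemma map_intCast_units (u : ℤˣ) : v ((u : ℤ) : K) = 0 :=
  map_eq_zero_of_mul_self_eq_one htop hbot hmul <| by
    rw [← Int.cast_mul, ← Units.val_mul, Int.units_mul_self, Units.val_one, Int.cast_one]

include htop hbot hmul in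
lemma map_prod {ι : Type*} (s : Finset ι) (f : ι → K) :
    v (∏ i ∈ s, f i) = ∑ i ∈ s, v (f i) := by
  classical
  induction s using Finset.induction with
  | empty => simpa using map_one_eq_zero htop hbot hmul
  | insert a s ha ih => rw [Finset.prod_insert ha, Finset.sum_insert ha, hmul, ih]

include hadd in
lemma exists_map_le_map_sum {ι : Type*} {s : Finset ι} (hs : s.Nonempty) (f : ι → K) :
    ∃ i ∈ s, v (f i) ≤ v (∑ j ∈ s, f j) := by
  induction hs using Finset.Nonempty.cons_induction with
  | singleton a => exact ⟨a, by simp⟩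
  | cons a s ha hs ih =>
    rw [Finset.sum_cons]
    rcases le_total (v (f a)) (v (∑ j ∈ s, f j)) with h | h
    · exact ⟨a, Finset.mem_cons_self a s, (min_eq_left h).symm.le.trans (hadd _ _)⟩
    · obtain ⟨b, hb, hvb⟩ := ih
      exact ⟨b, Finset.mem_cons_of_mem hb, hvb.trans ((min_eq_right h).symm.le.trans (hadd _ _))⟩

variable {n : Type*} [DecidableEq n]

include htop hbot hmul in
lemma iInf_map_one_apply_add (w : n → ℝ) (i : n) :
    ⨅ j, (v ((1 : Matrix n n K) i j) + (w j : EReal)) = w i := by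
  have hv1 := map_one_eq_zero htop hbot hmul
  refine le_antisymm (iInf_le_of_le i (by simp [hv1])) (le_iInf fun j => ?_)
  obtain rfl | hij := eq_or_ne i j
  · simp [hv1]
  · rw [one_apply_ne hij, (htop 0).2 rfl, EReal.top_add_of_ne_bot (EReal.coe_ne_bot _)]
    exact le_top

variable [Fintype n]

include htop hbot hmul hadd in
lemma exists_perm_sum_map_le_map_det (g : Matrix n n K) :
    ∃ σ : Equiv.Perm n, ∑ i, v (g (σ i) i) ≤ v g.det := by
  obtain ⟨σ, -, hσ⟩ := exists_map_le_map_sum hadd Finset.univ_nonempty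
    fun σ : Equiv.Perm n => ((Equiv.Perm.sign σ : ℤ) : K) * ∏ i, g (σ i) i
  refine ⟨σ, ?_⟩
  rwa [hmul, map_intCast_units htop hbot hmul, zero_add, map_prod htop hbot hmul,
    ← det_apply'] at hσ

include htop hbot hmul hadd in
lemma sum_iInf_map_add_le (g : Matrix n n K) (w : n → EReal) :
    ∑ i, ⨅ j, (v (g i j) + w j) ≤ ∑ j, w j + v g.det := by
  obtain ⟨σ, hσ⟩ := exists_perm_sum_map_le_map_det htop hbot hmul hadd g
  calc ∑ i, ⨅ j, (v (g i j) + w j)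
      = ∑ i, ⨅ j, (v (g (σ i) j) + w j) :=
        (Equiv.sum_comp σ fun i => ⨅ j, (v (g i j) + w j)).symm
    _ ≤ ∑ i, (v (g (σ i) i) + w i) := Finset.sum_le_sum fun i _ => iInf_le _ i
    _ = ∑ i, v (g (σ i) i) + ∑ j, w j := Finset.sum_add_distrib
    _ ≤ v g.det + ∑ j, w j := add_le_add_left hσ _
    _ = ∑ j, w j + v g.det := add_comm _ _

end ERealValuation

open ERealValuation

/-- Lemma 4.2(i) of the paper made explicit.  Let `v` be an additive valuation on a field
`K` (with values in `ℝ ∪ {∞}`, encoded in `EReal` via the hypothesis `v a ≠ ⊥`), `n ≥ 0`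
and `w : Fin (n+1) → ℝ`.  For every invertible `(n+1)×(n+1)` matrix `g` over `K` one has
`∑_i min_j (v(g_{ij}) + w_j) ≤ ∑_j w_j + v(det g)`, with equality when `g` is the identity
matrix.  Consequently, the supremum over all invertible `g` of
`∑_i min_j (v(g_{ij}) + w_j) − v(det g)` equals `∑_j w_j`. -/
theorem stmt6 {K : Type*} [Field K] (n : ℕ) (v : K → EReal)
    (htop : ∀ a : K, v a = ⊤ ↔ a = 0)
    (hbot : ∀ a : K, v a ≠ ⊥)
    (hmul : ∀ a b : K, v (a * b) = v a + v b)
    (hadd : ∀ a b : K, min (v a) (v b) ≤ v (a + b))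
    (w : Fin (n+1) → ℝ) :
    (∀ g : Matrix (Fin (n+1)) (Fin (n+1)) K, IsUnit g.det →
      (∑ i, ⨅ j, (v (g i j) + (w j : EReal))) ≤ (∑ j, (w j : EReal)) + v g.det) ∧
    ((∑ i, ⨅ j, (v ((1 : Matrix (Fin (n+1)) (Fin (n+1)) K) i j) + (w j : EReal))) =
      (∑ j, (w j : EReal)) + v (Matrix.det (1 : Matrix (Fin (n+1)) (Fin (n+1)) K))) ∧
    sSup {x : EReal | ∃ g : Matrix (Fin (n+1)) (Fin (n+1)) K, IsUnit g.det ∧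
        x = (∑ i, ⨅ j, (v (g i j) + (w j : EReal))) - v g.det} =
      ∑ j, (w j : EReal) := by
  have hv1 := map_one_eq_zero htop hbot hmul
  have hle g := sum_iInf_map_add_le htop hbot hmul hadd g fun j => (w j : EReal)
  have hone : ∑ i, ⨅ j, (v ((1 : Matrix (Fin (n+1)) (Fin (n+1)) K) i j) + (w j : EReal)) =
      ∑ j, (w j : EReal) + v (1 : Matrix (Fin (n+1)) (Fin (n+1)) K).det := by
    simp only [iInf_map_one_apply_add htop hbot hmul, det_one, hv1, add_zero]
  refine ⟨fun g _ => hle g, hone, IsGreatest.csSup_eq ⟨⟨1, by simp, ?_⟩, ?_⟩⟩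
  · rw [hone, det_one, hv1, add_zero, sub_zero]
  · rintro _ ⟨g, hg, rfl⟩
    rw [EReal.sub_le_iff_le_add (.inl (hbot _)) (.inl (mt (htop _).1 hg.ne_zero))]
    exact hle g
end

section
/- Let K be a field that is complete with respect to a nontrivial discrete additive valuation v_K : K → ℝ ∪ {∞} (so v_K(K×) is a nonzero discrete subgroup of ℝ), and let V be a finite-dimensional K-vector space. Let v and v' be two v_K-valuations on V, i.e. maps V → ℝ ∪ {∞} satisfying v(x+y) ≥ min(v(x), v(y)), v(c•x) = v_K(c) + v(x) for all c ∈ K, and v(x) = ∞ if and only if x = 0 (and likewise for v'). Then there exists a basis (x₀,…,x_n) of V that simultaneously diagonalizes v and v': for all scalars a₀,…,a_n ∈ K, v(∑_i a_i·x_i) = min_i (v_K(a_i) + v(x_i)) and v'(∑_i a_i·x_i) = min_i (v_K(a_i) + v'(x_i)). -/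
/-!
Call `x` orthogonal to a subspace `W` for `v` if `v (x + u) ≤ v x` for all `u ∈ W`. A basis
diagonalizes `v` as soon as each vector is orthogonal to the span of the later ones.

One valuation: a subspace `W` with a diagonal basis is complete, and the values `v (x - w)`,
`w ∈ W`, are bounded (by completeness) and lie in finitely many cosets of `cℤ` (by discreteness),
so for `x ∉ W` some `x - w` attains the maximum and is orthogonal to `W`; induct on the dimension.

Two valuations: comparing with diagonal bases shows that `v' x - v x` (for `x ≠ 0`) is bounded and
takes values in finitely many cosets of `cℤ`, so it attains its maximum at some `x₀`. If the
`v`-expansion of `x₀` in a `v`-diagonal basis is smallest at index `i`, the kernel `W` of the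
`i`-th coordinate is `v`-orthogonal to `x₀`. It is `v'`-orthogonal too: `v' (x₀ + u) > v' x₀`
together with `v (x₀ + u) ≤ v x₀` would make `v' - v` larger at `x₀ + u`. Induct on `W`.
-/

open Module Submodule

def ValuesInZMultiples {K : Type*} [Zero K] (vK : K → EReal) (c : ℝ) : Prop :=
  ∀ a : K, a ≠ 0 → ∃ k : ℤ, vK a = ((k * c : ℝ) : EReal)

def IsValComplete {G : Type*} [AddGroup G] (f : G → EReal) : Prop :=
  ∀ a : ℕ → G, (∀ M : ℝ, ∃ N : ℕ, ∀ m ≥ N, ∀ n ≥ N, (M : EReal) ≤ f (a m - a n)) →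
    ∃ l : G, ∀ M : ℝ, ∃ N : ℕ, ∀ n ≥ N, (M : EReal) ≤ f (a n - l)

lemma exists_isGreatest_of_mem_cosets {ι : Type*} [Finite ι] {c : ℝ} (hc : 0 < c) (t : ι → ℝ)
    {S : Set ℝ} (hne : S.Nonempty) (hbdd : BddAbove S)
    (hS : ∀ r ∈ S, (∃ r' ∈ S, r < r') → ∃ i, ∃ k : ℤ, r = t i + k * c) :
    ∃ r, IsGreatest S r := by
  by_contra! hmax
  have hnext : ∀ r ∈ S, ∃ r' ∈ S, r < r' := fun r hr => by
    by_contra! h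
    exact hmax r ⟨hr, h⟩
  set δ := sSup S
  have hlt : ∀ r ∈ S, r < δ := fun r hr =>
    let ⟨_, hr', h⟩ := hnext r hr
    h.trans_le (le_csSup hbdd hr')
  -- in each coset `t i + cℤ` only `t i + ⌊(δ - t i) / c⌋ c` can lie within `c / 2` below `δ`
  have hsub : S ∩ Set.Ioo (δ - c / 2) δ ⊆ Set.range fun i => t i + ⌊(δ - t i) / c⌋ * c := by
    rintro r ⟨hrS, hr₁, hr₂⟩
    obtain ⟨i, k, rfl⟩ := hS r hrS (hnext r hrS)
    refine ⟨i, ?_⟩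
    have hk : ⌊(δ - t i) / c⌋ = k := by
      rw [Int.floor_eq_iff, le_div_iff₀ hc, div_lt_iff₀ hc]
      constructor <;> nlinarith
    simp only [hk]
  obtain ⟨r, ⟨hrS, hr₁, -⟩, hr⟩ := Set.exists_max_image _ id ((Set.finite_range _).subset hsub)
    (let ⟨r, hrS, hr⟩ := exists_lt_of_lt_csSup hne (show δ - c / 2 < δ by linarith)
     ⟨r, hrS, hr, hlt r hrS⟩)
  obtain ⟨r', hr'S, hrr'⟩ := hnext r hrS
  exact (hr r' ⟨hr'S, hr₁.trans hrr', hlt r' hr'S⟩).not_gt hrr'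

theorem Module.Basis.exists_coe_eq_finCons {K V : Type*} [Field K] [AddCommGroup V] [Module K V]
    [FiniteDimensional K V] {n : ℕ} (h : finrank K V = n + 1) {W : Submodule K V}
    (bw : Basis (Fin n) K W) {x : V} (hx : x ∉ W) :
    ∃ b : Basis (Fin (n + 1)) K V, ⇑b = Fin.cons x fun j => (bw j : V) := by
  have hspan : span K (Set.range fun j => (bw j : V)) = W := by
    rw [show (Set.range fun j => (bw j : V)) = W.subtype '' Set.range bw by
      rw [← Set.range_comp]; rfl, span_image, bw.span_eq, map_subtype_top]
  have hli : LinearIndependent K (Fin.cons x fun j => (bw j : V) : Fin (n + 1) → V) :=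
    linearIndependent_finCons.2 ⟨bw.linearIndependent.map' W.subtype W.ker_subtype, by rwa [hspan]⟩
  exact ⟨basisOfLinearIndependentOfCardEqFinrank hli (by simp [h]),
    coe_basisOfLinearIndependentOfCardEqFinrank hli _⟩

theorem Module.Basis.finrank_ker_coord {K V : Type*} [Field K] [AddCommGroup V] [Module K V]
    [FiniteDimensional K V] {ι : Type*} (b : Basis ι K V) (i : ι) :
    finrank K (LinearMap.ker (b.coord i)) + 1 = finrank K V :=
  Module.Dual.finrank_ker_add_one_of_ne_zero fun h => by
    simpa using LinearMap.congr_fun h (b i)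

structure ModuleValuation {K : Type*} [Field K] (vK : K → EReal) (V : Type*) [AddCommGroup V]
    [Module K V] where
  toFun : V → EReal
  min_le_map_add : ∀ x y, min (toFun x) (toFun y) ≤ toFun (x + y)
  map_smul : ∀ (c : K) (x : V), toFun (c • x) = vK c + toFun x
  map_eq_top_iff : ∀ x, toFun x = ⊤ ↔ x = 0

namespace ModuleValuation

variable {K V : Type*} [Field K] [AddCommGroup V] [Module K V] {vK : K → EReal}

instance : CoeFun (ModuleValuation vK V) (fun _ => V → EReal) := ⟨toFun⟩

variable (v : ModuleValuation vK V)

@[simp]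
lemma map_zero : v 0 = ⊤ := (v.map_eq_top_iff 0).2 rfl

lemma add_map_eq_top (x : V) : vK 0 + v x = ⊤ := by
  rw [← v.map_smul, zero_smul, map_zero]

lemma map_ne_bot (x : V) : v x ≠ ⊥ := fun h => by
  simpa [h] using v.add_map_eq_top x

lemma map_ne_top {x : V} (hx : x ≠ 0) : v x ≠ ⊤ := fun h => hx ((v.map_eq_top_iff x).1 h)

lemma coe_toReal {x : V} (hx : x ≠ 0) : ((v x).toReal : EReal) = v x :=
  EReal.coe_toReal (v.map_ne_top hx) (v.map_ne_bot x)

lemma exists_eq_coe {x : V} (hx : x ≠ 0) : ∃ r : ℝ, v x = r :=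
  ⟨_, (v.coe_toReal hx).symm⟩

lemma toReal_le_toReal_iff {x y : V} (hx : x ≠ 0) (hy : y ≠ 0) :
    (v x).toReal ≤ (v y).toReal ↔ v x ≤ v y := by
  rw [← EReal.coe_le_coe_iff, v.coe_toReal hx, v.coe_toReal hy]

lemma toReal_lt_toReal_iff {x y : V} (hx : x ≠ 0) (hy : y ≠ 0) :
    (v x).toReal < (v y).toReal ↔ v x < v y := by
  rw [← EReal.coe_lt_coe_iff, v.coe_toReal hx, v.coe_toReal hy]

@[simp]
lemma map_neg (x : V) : v (-x) = v x := by
  rcases eq_or_ne x 0 with rfl | hx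
  · rw [neg_zero]
  -- together these two identities force `vK (-1) = 0`
  have h₁ : v (-x) = vK (-1) + v x := by rw [← v.map_smul, neg_one_smul]
  have h₂ : v x = vK (-1) + v (-x) := by rw [← v.map_smul, neg_one_smul, neg_neg]
  obtain ⟨a, ha⟩ := v.exists_eq_coe hx
  obtain ⟨b, hb⟩ := v.exists_eq_coe (neg_ne_zero.2 hx)
  rw [ha, hb] at h₁ h₂ ⊢
  generalize vK (-1) = k at h₁ h₂
  induction k with
  | bot => simp at h₁
  | top => simp at h₁
  | coe k =>
    rw [← EReal.coe_add, EReal.coe_eq_coe_iff] at h₁ h₂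
    rw [EReal.coe_eq_coe_iff]
    linarith

lemma min_le_map_sub (x y : V) : min (v x) (v y) ≤ v (x - y) := by
  simpa [sub_eq_add_neg] using v.min_le_map_add x (-y)

lemma map_add_eq_left_of_lt {x y : V} (h : v x < v y) : v (x + y) = v x := by
  refine le_antisymm ?_ (min_eq_left h.le ▸ v.min_le_map_add x y)
  by_contra! hlt
  have := v.min_le_map_sub (x + y) y
  rw [add_sub_cancel_right] at this
  exact this.not_gt (lt_min hlt h)

lemma map_sub_eq_left_of_lt {x y : V} (h : v x < v y) : v (x - y) = v x := by
  rw [sub_eq_add_neg]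
  exact v.map_add_eq_left_of_lt (by rwa [map_neg])

lemma le_map_sum {ι : Type*} (s : Finset ι) (f : ι → V) {B : EReal}
    (hB : ∀ i ∈ s, B ≤ v (f i)) : B ≤ v (∑ i ∈ s, f i) := by
  induction s using Finset.cons_induction with
  | empty => simp
  | cons i s hi ih =>
    rw [Finset.sum_cons]
    exact (le_min (hB i (s.mem_cons_self i))
      (ih fun j hj => hB j (Finset.mem_cons_of_mem hj))).trans (v.min_le_map_add _ _)

lemma iInf_le_map_sum {ι : Type*} [Fintype ι] (a : ι → K) (e : ι → V) :
    ⨅ i, vK (a i) + v (e i) ≤ v (∑ i, a i • e i) :=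
  v.le_map_sum _ _ fun i _ => v.map_smul (a i) (e i) ▸ iInf_le _ i

def restrict (W : Submodule K V) : ModuleValuation vK W where
  toFun x := v x
  min_le_map_add x y := v.min_le_map_add x y
  map_smul c x := v.map_smul c x
  map_eq_top_iff x := by rw [v.map_eq_top_iff, ZeroMemClass.coe_eq_zero]

@[simp]
lemma restrict_apply (W : Submodule K V) (x : W) : v.restrict W x = v x := rfl

def IsDiagonal {ι : Type*} [Fintype ι] (e : ι → V) : Prop :=
  ∀ a : ι → K, v (∑ i, a i • e i) = ⨅ i, vK (a i) + v (e i)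

-- Equivalent to `v (a • x + u) = min (v (a • x)) (v u)` for all `u ∈ W`, see
-- `IsOrthogonal.map_smul_add`.
def IsOrthogonal (x : V) (W : Submodule K V) : Prop :=
  ∀ u ∈ W, v (x + u) ≤ v x

variable {v}

lemma IsOrthogonal.map_smul_add {x u : V} {W : Submodule K V} (h : v.IsOrthogonal x W)
    (A : K) (hu : u ∈ W) : v (A • x + u) = min (vK A + v x) (v u) := by
  rcases eq_or_ne A 0 with rfl | hA
  · simp [v.add_map_eq_top]
  have hle : v (A • x + u) ≤ vK A + v x := by
    rw [show A • x + u = A • (x + A⁻¹ • u) by rw [smul_add, smul_inv_smul₀ hA], v.map_smul]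
    gcongr
    exact h _ (W.smul_mem _ hu)
  refine le_antisymm (le_min hle ?_) (v.map_smul A x ▸ v.min_le_map_add _ _)
  rcases lt_or_ge (v u) (v (A • x)) with hlt | hge
  · rw [add_comm, v.map_add_eq_left_of_lt hlt]
  · exact hle.trans (v.map_smul A x ▸ hge)

lemma repr_ne_zero_of_map_eq {ι : Type*} {b : Basis ι K V} {x : V} (hx : x ≠ 0) {i : ι}
    (hi : v x = vK (b.repr x i) + v (b i)) : b.repr x i ≠ 0 := fun h => by
  rw [h, v.add_map_eq_top] at hi
  exact v.map_ne_top hx hi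

section IsDiagonal

variable {ι : Type*} [Fintype ι]

lemma isDiagonal_of_isEmpty [IsEmpty ι] (e : ι → V) : v.IsDiagonal e := fun a => by
  simpa using (iInf_of_empty _).symm

lemma IsDiagonal.map_eq_iInf_repr {b : Basis ι K V} (hb : v.IsDiagonal b) (x : V) :
    v x = ⨅ i, vK (b.repr x i) + v (b i) := by
  conv_lhs => rw [← b.sum_repr x]
  exact hb _

lemma IsDiagonal.le_map_iff {b : Basis ι K V} (hb : v.IsDiagonal b) {M : EReal} {x : V} :
    M ≤ v x ↔ ∀ i, M ≤ vK (b.repr x i) + v (b i) := by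
  rw [hb.map_eq_iInf_repr, le_iInf_iff]

lemma IsDiagonal.map_le {b : Basis ι K V} (hb : v.IsDiagonal b) (x : V) (i : ι) :
    v x ≤ vK (b.repr x i) + v (b i) :=
  hb.map_eq_iInf_repr x ▸ iInf_le _ i

lemma IsDiagonal.of_restrict {W : Submodule K V} {e : ι → W} (he : (v.restrict W).IsDiagonal e) :
    v.IsDiagonal fun i => (e i : V) := fun a => by
  simpa using he a

lemma IsDiagonal.cons {n : ℕ} {x : V} {W : Submodule K V} {e : Fin n → V}
    (he : v.IsDiagonal e) (hx : v.IsOrthogonal x W) (heW : ∀ j, e j ∈ W) :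
    v.IsDiagonal (Fin.cons x e : Fin (n + 1) → V) := fun a => by
  rw [Fin.sum_univ_succ]
  simp only [Fin.cons_zero, Fin.cons_succ]
  rw [hx.map_smul_add _ (sum_mem fun j _ => W.smul_mem _ (heW j)), he]
  refine eq_of_forall_le_iff fun B => ?_
  simp only [le_min_iff, le_iInf_iff, Fin.forall_fin_succ, Fin.cons_zero, Fin.cons_succ]

lemma IsDiagonal.exists_map_eq {b : Basis ι K V} (hb : v.IsDiagonal b) [Nonempty ι] (x : V) :
    ∃ i, v x = vK (b.repr x i) + v (b i) := by
  obtain ⟨i, hi⟩ := Finite.exists_min fun i => vK (b.repr x i) + v (b i)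
  exact ⟨i, le_antisymm (hb.map_le x i) (hb.le_map_iff.2 hi)⟩

lemma IsDiagonal.isOrthogonal_ker_coord {b : Basis ι K V} (hb : v.IsDiagonal b) {x : V} {i : ι}
    (hi : v x = vK (b.repr x i) + v (b i)) : v.IsOrthogonal x (LinearMap.ker (b.coord i)) := by
  intro u hu
  rw [LinearMap.mem_ker, Basis.coord_apply] at hu
  calc v (x + u) ≤ vK (b.repr (x + u) i) + v (b i) := hb.map_le _ i
    _ = v x := by rw [map_add, Finsupp.add_apply, hu, add_zero, hi]

lemma IsDiagonal.exists_toReal_eq_add_mul {c : ℝ} (hdisc : ValuesInZMultiples vK c)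
    {b : Basis ι K V} (hb : v.IsDiagonal b) {x : V} (hx : x ≠ 0) :
    ∃ i, ∃ k : ℤ, (v x).toReal = (v (b i)).toReal + k * c := by
  have : Nontrivial V := nontrivial_of_ne x 0 hx
  have := b.index_nonempty
  obtain ⟨i, hi⟩ := hb.exists_map_eq x
  obtain ⟨k, hk⟩ := hdisc _ (repr_ne_zero_of_map_eq hx hi)
  refine ⟨i, k, ?_⟩
  rw [hi, hk, ← v.coe_toReal (b.ne_zero i), ← EReal.coe_add, EReal.toReal_coe, EReal.toReal_coe,
    add_comm]

lemma IsDiagonal.isValComplete (hK : IsValComplete vK) {b : Basis ι K V} (hb : v.IsDiagonal b) :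
    IsValComplete v := by
  intro a hcau
  choose t ht using fun i => v.exists_eq_coe (b.ne_zero i)
  have hcoord : ∀ i, ∃ l, ∀ M : ℝ, ∃ N, ∀ n ≥ N, (M : EReal) ≤ vK (b.repr (a n) i - l) :=
    fun i => hK _ fun M => by
      obtain ⟨N, hN⟩ := hcau (M + t i)
      refine ⟨N, fun m hm n hn => ?_⟩
      have := (hN m hm n hn).trans (hb.map_le _ i)
      rwa [map_sub, Finsupp.sub_apply, ht, EReal.coe_add,
        (EReal.addLECancellable_coe _).add_le_add_iff_right] at this
  choose L hL using hcoord
  refine ⟨b.equivFun.symm L, fun M => ?_⟩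
  choose N hN using fun i => hL i (M - t i)
  refine ⟨Finset.univ.sup N, fun n hn => hb.le_map_iff.2 fun i => ?_⟩
  have hrepr : b.repr (a n - b.equivFun.symm L) i = b.repr (a n) i - L i := by
    rw [map_sub, Finsupp.sub_apply, ← b.equivFun_apply (b.equivFun.symm L),
      LinearEquiv.apply_symm_apply]
  calc (M : EReal) = ((M - t i : ℝ) : EReal) + t i := by rw [← EReal.coe_add, sub_add_cancel]
    _ ≤ vK (b.repr (a n - b.equivFun.symm L) i) + v (b i) := by
      rw [hrepr, ht]
      gcongr
      exact hN i n ((Finset.le_sup (Finset.mem_univ i)).trans hn)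

end IsDiagonal

lemma mem_of_forall_exists_le_map_sub {W : Submodule K V} (hW : IsValComplete (v.restrict W))
    {x : V} (h : ∀ M : ℝ, ∃ w ∈ W, (M : EReal) ≤ v (x - w)) : x ∈ W := by
  choose w hwW hw using fun n : ℕ => h n
  have hw' : ∀ M : ℝ, ∀ n ≥ ⌈M⌉₊, (M : EReal) ≤ v (x - w n) := fun M n hn =>
    (EReal.coe_le_coe_iff.2 ((Nat.le_ceil M).trans (by exact_mod_cast hn))).trans (hw n)
  obtain ⟨l, hl⟩ := hW (fun n => ⟨w n, hwW n⟩) fun M => ⟨⌈M⌉₊, fun m hm n hn => by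
    rw [restrict_apply, W.coe_sub, ← sub_sub_sub_cancel_left _ _ x]
    exact (le_min (hw' M n hn) (hw' M m hm)).trans (v.min_le_map_sub _ _)⟩
  have hxl : v (x - l) = ⊤ := by
    refine (EReal.eq_top_iff_forall_lt _).2 fun M => ?_
    obtain ⟨N, hN⟩ := hl (M + 1)
    have hn := hN (max N ⌈M + 1⌉₊) (le_max_left _ _)
    rw [restrict_apply, W.coe_sub] at hn
    calc (M : EReal) < (M + 1 : ℝ) := EReal.coe_lt_coe_iff.2 (lt_add_one M)
      _ ≤ v ((x - w (max N ⌈M + 1⌉₊)) + (w (max N ⌈M + 1⌉₊) - l)) :=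
        (le_min (hw' _ _ (le_max_right _ _)) hn).trans (v.min_le_map_add _ _)
      _ = v (x - l) := by rw [sub_add_sub_cancel]
  rw [v.map_eq_top_iff, sub_eq_zero] at hxl
  exact hxl ▸ l.2

lemma exists_isOrthogonal_sub {c : ℝ} (hc : 0 < c)
    (hdisc : ValuesInZMultiples vK c) (hK : IsValComplete vK)
    {ι : Type*} [Fintype ι] {W : Submodule K V} {b : Basis ι K W}
    (hb : (v.restrict W).IsDiagonal b) {x : V} (hx : x ∉ W) :
    ∃ w ∈ W, v.IsOrthogonal (x - w) W := by
  have hne : ∀ w : W, x - w ≠ 0 := fun w h => hx (sub_eq_zero.1 h ▸ w.2)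
  set S := Set.range fun w : W => (v (x - w)).toReal
  have hbdd : BddAbove S := by
    by_contra hS
    refine hx (v.mem_of_forall_exists_le_map_sub (hb.isValComplete hK) fun M => ?_)
    obtain ⟨_, ⟨w, rfl⟩, hw⟩ := not_bddAbove_iff.1 hS M
    exact ⟨w, w.2, v.coe_toReal (hne w) ▸ EReal.coe_le_coe_iff.2 hw.le⟩
  have hcoset : ∀ r ∈ S, (∃ r' ∈ S, r < r') →
      ∃ i, ∃ k : ℤ, r = (v.restrict W (b i)).toReal + k * c := by
    rintro _ ⟨w, rfl⟩ ⟨_, ⟨w', rfl⟩, hlt⟩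
    rw [v.toReal_lt_toReal_iff (hne w) (hne w')] at hlt
    have heq : v.restrict W (w' - w) = v (x - w) := by
      rw [restrict_apply, W.coe_sub, ← sub_sub_sub_cancel_left _ _ x,
        v.map_sub_eq_left_of_lt hlt]
    simp only [← heq]
    refine hb.exists_toReal_eq_add_mul hdisc (sub_ne_zero.2 fun h => ?_)
    rw [h] at hlt
    exact hlt.false
  obtain ⟨_, ⟨w₀, rfl⟩, hw₀⟩ :=
    exists_isGreatest_of_mem_cosets hc _ (Set.range_nonempty _) hbdd hcoset
  refine ⟨w₀, w₀.2, fun u hu => ?_⟩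
  have hmax := hw₀ ⟨w₀ - ⟨u, hu⟩, rfl⟩
  rw [v.toReal_le_toReal_iff (hne _) (hne _), W.coe_sub, sub_sub_eq_add_sub, add_sub_right_comm]
    at hmax
  exact hmax

lemma exists_map_le_add (v v' : ModuleValuation vK V) {ι : Type*} [Fintype ι]
    {f : Basis ι K V} (hf : v'.IsDiagonal f) : ∃ M : ℝ, ∀ x, v' x ≤ v x + M := by
  obtain ⟨M, hM⟩ :=
    Finset.exists_le (Finset.univ.image fun j => (v' (f j)).toReal - (v (f j)).toReal)
  have hfM : ∀ j, v' (f j) ≤ v (f j) + M := fun j => by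
    have := hM _ (Finset.mem_image_of_mem _ (Finset.mem_univ j))
    rw [← v.coe_toReal (f.ne_zero j), ← v'.coe_toReal (f.ne_zero j), ← EReal.coe_add,
      EReal.coe_le_coe_iff]
    linarith
  refine ⟨M, fun x => ?_⟩
  rcases eq_or_ne x 0 with rfl | hx
  · simp
  have : Nontrivial V := nontrivial_of_ne x 0 hx
  have := f.index_nonempty
  obtain ⟨j, hj⟩ := Finite.exists_min fun j => vK (f.repr x j) + v (f j)
  have hjx : vK (f.repr x j) + v (f j) ≤ v x := by
    refine (le_iInf hj).trans ?_
    conv_rhs => rw [← f.sum_repr x]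
    exact v.iInf_le_map_sum _ _
  calc v' x ≤ vK (f.repr x j) + v' (f j) := hf.map_le x j
    _ ≤ vK (f.repr x j) + (v (f j) + M) := by gcongr; exact hfM j
    _ ≤ v x + M := by rw [← add_assoc]; gcongr

lemma exists_forall_toReal_sub_le {c : ℝ} (hc : 0 < c)
    (hdisc : ValuesInZMultiples vK c) [Nontrivial V]
    {v v' : ModuleValuation vK V} {ι κ : Type*} [Fintype ι] [Fintype κ] {e : Basis ι K V}
    {f : Basis κ K V} (he : v.IsDiagonal e) (hf : v'.IsDiagonal f) :
    ∃ x₀ ≠ 0, ∀ x ≠ 0, (v' x).toReal - (v x).toReal ≤ (v' x₀).toReal - (v x₀).toReal := by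
  set S := (fun x => (v' x).toReal - (v x).toReal) '' {x | x ≠ 0}
  have hbdd : BddAbove S := by
    obtain ⟨M, hM⟩ := exists_map_le_add v v' hf
    refine ⟨M, ?_⟩
    rintro _ ⟨x, hx, rfl⟩
    have := hM x
    rw [← v.coe_toReal hx, ← v'.coe_toReal hx, ← EReal.coe_add, EReal.coe_le_coe_iff] at this
    dsimp only
    linarith
  have hcoset : ∀ r ∈ S, (∃ r' ∈ S, r < r') →
      ∃ p : ι × κ, ∃ k : ℤ, r = ((v' (f p.2)).toReal - (v (e p.1)).toReal) + k * c := by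
    rintro _ ⟨x, hx, rfl⟩ -
    obtain ⟨i, k, hk⟩ := he.exists_toReal_eq_add_mul hdisc hx
    obtain ⟨j, k', hk'⟩ := hf.exists_toReal_eq_add_mul hdisc hx
    refine ⟨(i, j), k' - k, ?_⟩
    dsimp only
    rw [hk, hk']
    push_cast
    ring
  obtain ⟨_, ⟨x₀, hx₀, rfl⟩, hmax⟩ := exists_isGreatest_of_mem_cosets hc _
    ((Set.nonempty_compl_of_nontrivial 0).image _) hbdd hcoset
  exact ⟨x₀, hx₀, fun x hx => hmax ⟨x, hx, rfl⟩⟩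

lemma IsOrthogonal.of_forall_toReal_sub_le {v v' : ModuleValuation vK V} {x₀ : V}
    {W : Submodule K V} (h : v.IsOrthogonal x₀ W) (hx₀ : x₀ ≠ 0)
    (hmax : ∀ x ≠ 0, (v' x).toReal - (v x).toReal ≤ (v' x₀).toReal - (v x₀).toReal) :
    v'.IsOrthogonal x₀ W := by
  intro u hu
  by_contra! hlt
  have hy : x₀ + u ≠ 0 := fun h0 => by
    simpa [h0, v.map_ne_top hx₀] using h u hu
  have h₁ := (v.toReal_le_toReal_iff hy hx₀).2 (h u hu)
  have h₂ := (v'.toReal_lt_toReal_iff hx₀ hy).2 hlt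
  linarith [hmax _ hy]

theorem exists_basis_isDiagonal {c : ℝ} (hc : 0 < c)
    (hdisc : ValuesInZMultiples vK c) (hK : IsValComplete vK)
    [FiniteDimensional K V] (v : ModuleValuation vK V) :
    ∃ b : Basis (Fin (finrank K V)) K V, v.IsDiagonal b := by
  induction h : finrank K V generalizing V with
  | zero => exact ⟨finBasisOfFinrankEq K V h, isDiagonal_of_isEmpty _⟩
  | succ n ih =>
    let b₀ := finBasisOfFinrankEq K V h
    let W := LinearMap.ker (b₀.coord 0)
    obtain ⟨bw, hbw⟩ :=
      ih (v.restrict W) (Nat.succ_injective ((b₀.finrank_ker_coord 0).trans h))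
    have hx : b₀ 0 ∉ W := by simp [W]
    obtain ⟨w, hw, hxw⟩ := v.exists_isOrthogonal_sub hc hdisc hK hbw hx
    obtain ⟨b, hb⟩ :=
      Module.Basis.exists_coe_eq_finCons h bw fun h' => hx ((W.sub_mem_iff_left hw).1 h')
    refine ⟨b, ?_⟩
    rw [hb]
    exact hbw.of_restrict.cons hxw fun j => (bw j).2

theorem exists_basis_isDiagonal_isDiagonal {c : ℝ} (hc : 0 < c)
    (hdisc : ValuesInZMultiples vK c) (hK : IsValComplete vK)
    [FiniteDimensional K V] (v v' : ModuleValuation vK V) :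
    ∃ b : Basis (Fin (finrank K V)) K V, v.IsDiagonal b ∧ v'.IsDiagonal b := by
  induction h : finrank K V generalizing V with
  | zero =>
    exact ⟨finBasisOfFinrankEq K V h, isDiagonal_of_isEmpty _, isDiagonal_of_isEmpty _⟩
  | succ n ih =>
    have : Nontrivial V := Module.nontrivial_of_finrank_eq_succ h
    obtain ⟨e, he⟩ := exists_basis_isDiagonal hc hdisc hK v
    obtain ⟨f, hf⟩ := exists_basis_isDiagonal hc hdisc hK v'
    obtain ⟨x₀, hx₀, hmax⟩ := exists_forall_toReal_sub_le hc hdisc he hf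
    have := e.index_nonempty
    obtain ⟨i, hi⟩ := he.exists_map_eq x₀
    let W := LinearMap.ker (e.coord i)
    obtain ⟨bw, hbw, hbw'⟩ := ih (v.restrict W) (v'.restrict W)
      (Nat.succ_injective ((e.finrank_ker_coord i).trans h))
    have hx₀W : x₀ ∉ W := by simpa [W] using repr_ne_zero_of_map_eq hx₀ hi
    have horth := he.isOrthogonal_ker_coord hi
    obtain ⟨b, hb⟩ := Module.Basis.exists_coe_eq_finCons h bw hx₀W
    refine ⟨b, ?_, ?_⟩ <;> rw [hb]
    · exact hbw.of_restrict.cons horth fun j => (bw j).2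
    · exact hbw'.of_restrict.cons (horth.of_forall_toReal_sub_le hx₀ hmax) fun j => (bw j).2

end ModuleValuation

theorem stmt7_general {K V : Type*} [Field K] [AddCommGroup V] [Module K V] [FiniteDimensional K V]
    (vK : K → EReal)
    -- the value group is contained in a discrete subgroup `c·ℤ` of `ℝ` ...
    (hdisc : ∃ c : ℝ, 0 < c ∧ ∀ a : K, a ≠ 0 → ∃ k : ℤ, vK a = (((k : ℝ) * c : ℝ) : EReal))
    -- `K` is complete with respect to `vK`
    (hcomplete : ∀ a : ℕ → K,
      (∀ M : ℝ, ∃ N : ℕ, ∀ m ≥ N, ∀ n ≥ N, (M : EReal) ≤ vK (a m - a n)) →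
      ∃ l : K, ∀ M : ℝ, ∃ N : ℕ, ∀ n ≥ N, (M : EReal) ≤ vK (a n - l))
    (v v' : V → EReal)
    (hv1 : ∀ x y : V, min (v x) (v y) ≤ v (x + y))
    (hv2 : ∀ (c : K) (x : V), v (c • x) = vK c + v x)
    (hv3 : ∀ x : V, v x = ⊤ ↔ x = 0)
    (hv'1 : ∀ x y : V, min (v' x) (v' y) ≤ v' (x + y))
    (hv'2 : ∀ (c : K) (x : V), v' (c • x) = vK c + v' x)
    (hv'3 : ∀ x : V, v' x = ⊤ ↔ x = 0) :
    ∃ b : Module.Basis (Fin (Module.finrank K V)) K V,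
      (∀ a : Fin (Module.finrank K V) → K,
        v (∑ i, a i • b i) = ⨅ i, (vK (a i) + v (b i))) ∧
      (∀ a : Fin (Module.finrank K V) → K,
        v' (∑ i, a i • b i) = ⨅ i, (vK (a i) + v' (b i))) := by
  obtain ⟨c, hc, hdisc⟩ := hdisc
  exact ModuleValuation.exists_basis_isDiagonal_isDiagonal hc hdisc hcomplete
    ⟨v, hv1, hv2, hv3⟩ ⟨v', hv'1, hv'2, hv'3⟩

/-- Proposition 3.2 of the paper: over a field `K` complete with respect to a nontrivial
discrete additive valuation `vK` (values in `ℝ ∪ {∞}`, encoded in `EReal`), any two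
`vK`-valuations `v, v'` on a finite-dimensional `K`-vector space `V` can be simultaneously
diagonalized by a basis of `V`. -/
theorem stmt7 {K V : Type*} [Field K] [AddCommGroup V] [Module K V] [FiniteDimensional K V]
    (vK : K → EReal)
    (htop : ∀ a : K, vK a = ⊤ ↔ a = 0)
    (hbot : ∀ a : K, vK a ≠ ⊥)
    (hmul : ∀ a b : K, vK (a * b) = vK a + vK b)
    (hadd : ∀ a b : K, min (vK a) (vK b) ≤ vK (a + b))
    -- the value group is contained in a discrete subgroup `c·ℤ` of `ℝ` ...
    (hdisc : ∃ c : ℝ, 0 < c ∧ ∀ a : K, a ≠ 0 → ∃ k : ℤ, vK a = (((k : ℝ) * c : ℝ) : EReal))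
    -- ... and is nonzero
    (hnontriv : ∃ a : K, a ≠ 0 ∧ vK a ≠ 0)
    -- `K` is complete with respect to `vK`
    (hcomplete : ∀ a : ℕ → K,
      (∀ M : ℝ, ∃ N : ℕ, ∀ m ≥ N, ∀ n ≥ N, (M : EReal) ≤ vK (a m - a n)) →
      ∃ l : K, ∀ M : ℝ, ∃ N : ℕ, ∀ n ≥ N, (M : EReal) ≤ vK (a n - l))
    (v v' : V → EReal)
    (hv1 : ∀ x y : V, min (v x) (v y) ≤ v (x + y))
    (hv2 : ∀ (c : K) (x : V), v (c • x) = vK c + v x)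
    (hv3 : ∀ x : V, v x = ⊤ ↔ x = 0)
    (hv'1 : ∀ x y : V, min (v' x) (v' y) ≤ v' (x + y))
    (hv'2 : ∀ (c : K) (x : V), v' (c • x) = vK c + v' x)
    (hv'3 : ∀ x : V, v' x = ⊤ ↔ x = 0) :
    ∃ b : Module.Basis (Fin (Module.finrank K V)) K V,
      (∀ a : Fin (Module.finrank K V) → K,
        v (∑ i, a i • b i) = ⨅ i, (vK (a i) + v (b i))) ∧
      (∀ a : Fin (Module.finrank K V) → K,
        v' (∑ i, a i • b i) = ⨅ i, (vK (a i) + v' (b i))) :=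
  stmt7_general vK hdisc hcomplete v v' hv1 hv2 hv3 hv'1 hv'2 hv'3
end

section
/- Let K be a field complete with respect to a nontrivial discrete additive valuation v_K, let L/K be a finite field extension and v_L the unique additive valuation on L extending v_K. Let V = K^{n+1}, let v be a v_K-valuation on V, and suppose the basis (x₀,…,x_n) diagonalizes v, i.e. v(∑_i a_i·x_i) = min_i (v_K(a_i) + v(x_i)) for all a_i ∈ K. Define ṽ : L^{n+1} → ℝ ∪ {∞} by ṽ(x) := sup over all finite representations x = ∑_j b_j·y_j with b_j ∈ L and y_j ∈ V of min_j (v_L(b_j) + v(y_j)). Then ṽ is a v_L-valuation on L^{n+1} whose restriction to V equals v, and for all b₀,…,b_n ∈ L one has ṽ(∑_i b_i·x_i) = min_i (v_L(b_i) + v(x_i)). -/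
/-!
Base change of the diagonalizing basis `b` gives an `L`-basis `b_L` of `L^{n+1}`.
If `x = ∑ j, c j • y j` and `y j = ∑ i, a j i • b i`, then the `i`-th coordinate of `x`
in `b_L` is `∑ j, c j * a j i`, while diagonality gives `v (y j) ≤ v_K (a j i) + v (b i)`;
hence `min_j (v_L (c j) + v (y j)) ≤ v_L (x_i) + v (b i)` for every `i`, and the
representation of `x` in `b_L` attains the bound. So `ṽ x = min_i (v_L (x_i) + v (b i))`,
and this diagonal expression is visibly a `v_L`-valuation.
-/

open Module Submodule

lemma Monotone.map_iInf_of_finite {α β ι : Type*} [CompleteLinearOrder α] [CompleteLattice β]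
    [Finite ι] [Nonempty ι] {f : α → β} (hf : Monotone f) (g : ι → α) :
    f (⨅ i, g i) = ⨅ i, f (g i) := by
  obtain ⟨i₀, hi₀⟩ := exists_eq_ciInf_of_finite (f := g)
  exact le_antisymm (le_iInf fun i => hf (iInf_le g i)) (hi₀ ▸ iInf_le _ i₀)

lemma EReal.eq_top_of_add_eq_top {p q : EReal} (hq : q ≠ ⊤) (h : p + q = ⊤) : p = ⊤ := by
  induction p using EReal.rec <;> induction q using EReal.rec <;> simp_all [← EReal.coe_add]

namespace Module.Basis

section ExtendScalars

variable {K : Type*} (L : Type*) {ι : Type*} [Field K] [Field L] [Algebra K L] [Fintype ι]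
  (b : Basis ι K (ι → K))

lemma algebraMap_comp_eq_sum (y : ι → K) :
    (fun s => algebraMap K L (y s)) =
      ∑ i, algebraMap K L (b.repr y i) • fun s => algebraMap K L (b i s) := by
  conv_lhs => rw [← b.sum_repr y]
  ext s
  simp [Finset.sum_apply, Algebra.smul_def]

lemma top_le_span_algebraMap_comp :
    ⊤ ≤ span L (Set.range fun i s => algebraMap K L (b i s)) := by
  classical
  rw [← (Pi.basisFun L ι).span_eq, span_le]
  rintro _ ⟨s, rfl⟩
  have hstd : Pi.basisFun L ι s = fun t => algebraMap K L (Pi.basisFun K ι s t) := by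
    ext t
    simp [Pi.single_apply, apply_ite (algebraMap K L)]
  rw [hstd, algebraMap_comp_eq_sum L b]
  exact sum_mem fun i _ => smul_mem _ _ (subset_span ⟨i, rfl⟩)

noncomputable def extendScalarsPi : Basis ι L (ι → L) :=
  basisOfTopLeSpanOfCardEqFinrank _ (top_le_span_algebraMap_comp L b) (by simp)

lemma extendScalarsPi_apply (i : ι) :
    b.extendScalarsPi L i = fun s => algebraMap K L (b i s) := by
  simp [extendScalarsPi]

lemma extendScalarsPi_repr_algebraMap (y : ι → K) (i : ι) :
    (b.extendScalarsPi L).repr (fun s => algebraMap K L (y s)) i = algebraMap K L (b.repr y i) := by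
  simp_rw [algebraMap_comp_eq_sum L b y, ← extendScalarsPi_apply, repr_sum_self]

end ExtendScalars

section DiagonalValuation

variable {L W ι : Type*} [Field L] [AddCommGroup W] [Module L W]
  (bL : Basis ι L W) (vL : L → EReal) (w : ι → EReal)

noncomputable def diagonalValuation (x : W) : EReal :=
  ⨅ i, (vL (bL.repr x i) + w i)

variable {bL vL w}

lemma diagonalValuation_sum_smul [Fintype ι] (a : ι → L) :
    bL.diagonalValuation vL w (∑ i, a i • bL i) = ⨅ i, (vL (a i) + w i) := by
  simp only [diagonalValuation, repr_sum_self]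

lemma min_le_diagonalValuation_add (haddL : ∀ a b : L, min (vL a) (vL b) ≤ vL (a + b))
    (x y : W) :
    min (bL.diagonalValuation vL w x) (bL.diagonalValuation vL w y) ≤
      bL.diagonalValuation vL w (x + y) := by
  refine le_iInf fun i => ?_
  rw [map_add, Finsupp.add_apply]
  calc min (bL.diagonalValuation vL w x) (bL.diagonalValuation vL w y)
      ≤ min (vL (bL.repr x i) + w i) (vL (bL.repr y i) + w i) :=
        min_le_min (iInf_le _ i) (iInf_le _ i)
    _ = min (vL (bL.repr x i)) (vL (bL.repr y i)) + w i := min_add_add_right _ _ _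
    _ ≤ vL (bL.repr x i + bL.repr y i) + w i := add_le_add_left (haddL _ _) _

lemma diagonalValuation_smul [Finite ι] [Nonempty ι]
    (hmulL : ∀ a b : L, vL (a * b) = vL a + vL b) (c : L) (x : W) :
    bL.diagonalValuation vL w (c • x) = vL c + bL.diagonalValuation vL w x := by
  simp only [diagonalValuation, map_smul, Finsupp.smul_apply, smul_eq_mul, hmulL, add_assoc]
  exact ((monotone_id.const_add (vL c)).map_iInf_of_finite _).symm

lemma diagonalValuation_eq_top_iff (htopL : ∀ a : L, vL a = ⊤ ↔ a = 0)
    (hw_top : ∀ i, w i ≠ ⊤) (hw_bot : ∀ i, w i ≠ ⊥) (x : W) :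
    bL.diagonalValuation vL w x = ⊤ ↔ x = 0 := by
  simp only [diagonalValuation, iInf_eq_top]
  constructor
  · intro h
    rw [← bL.repr.map_eq_zero_iff]
    ext i
    exact (htopL _).1 (EReal.eq_top_of_add_eq_top (hw_top i) (h i))
  · rintro rfl i
    rw [map_zero, Finsupp.zero_apply, (htopL 0).2 rfl]
    exact EReal.top_add_of_ne_bot (hw_bot i)

end DiagonalValuation

section Diagonalizes

variable {K V ι : Type*} [Field K] [AddCommGroup V] [Module K V] [Fintype ι]

def Diagonalizes (b : Basis ι K V) (vK : K → EReal) (v : V → EReal) : Prop :=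
  ∀ a : ι → K, v (∑ i, a i • b i) = ⨅ i, (vK (a i) + v (b i))

variable {b : Basis ι K V} {vK : K → EReal} {v : V → EReal}

lemma Diagonalizes.apply_eq (hdiag : b.Diagonalizes vK v) (y : V) :
    v y = ⨅ i, (vK (b.repr y i) + v (b i)) := by
  simpa only [b.sum_repr] using hdiag (b.repr y)

lemma Diagonalizes.apply_ne_bot (hdiag : b.Diagonalizes vK v) (h0 : v 0 = ⊤) (i : ι) :
    v (b i) ≠ ⊥ := by
  intro hbot
  have h := iInf_eq_top.1 ((hdiag.apply_eq 0).symm.trans h0) i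
  rw [hbot, EReal.add_bot] at h
  exact bot_ne_top h

end Diagonalizes

section ExtendScalarsDiagonal

variable {K L ι : Type*} [Field K] [Field L] [Algebra K L] [Fintype ι]
  {b : Basis ι K (ι → K)} {vK : K → EReal} {vL : L → EReal} {v : (ι → K) → EReal}

lemma diagonalValuation_algebraMap (hext : ∀ a : K, vL (algebraMap K L a) = vK a)
    (hdiag : b.Diagonalizes vK v) (y : ι → K) :
    (b.extendScalarsPi L).diagonalValuation vL (fun i => v (b i))
      (fun s => algebraMap K L (y s)) = v y := by
  simp only [diagonalValuation, extendScalarsPi_repr_algebraMap, hext, ← hdiag.apply_eq]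

lemma extendScalarsPi_repr_sum {N : ℕ} (c : Fin N → L) (y : Fin N → ι → K) (i : ι) :
    (b.extendScalarsPi L).repr (∑ j, c j • fun s => algebraMap K L (y j s)) i =
      ∑ j, c j * algebraMap K L (b.repr (y j) i) := by
  simp [extendScalarsPi_repr_algebraMap]

end ExtendScalarsDiagonal

end Module.Basis

open Module.Basis

section ExtendedValuation

variable {K L σ : Type*} [Field K] [Field L] [Algebra K L]

noncomputable def extendedValuation (vL : L → EReal) (v : (σ → K) → EReal) (x : σ → L) :
    EReal :=
  sSup {r : EReal | ∃ (N : ℕ) (c : Fin N → L) (y : Fin N → σ → K),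
    x = ∑ j, c j • (fun s => algebraMap K L (y j s)) ∧ r = ⨅ j, (vL (c j) + v (y j))}

theorem extendedValuation_eq_diagonalValuation [Fintype σ] {vK : K → EReal} {vL : L → EReal}
    {v : (σ → K) → EReal} {b : Basis σ K (σ → K)}
    (hmulL : ∀ a b : L, vL (a * b) = vL a + vL b)
    (haddL : ∀ a b : L, min (vL a) (vL b) ≤ vL (a + b)) (h0L : vL 0 = ⊤)
    (hext : ∀ a : K, vL (algebraMap K L a) = vK a) (hdiag : b.Diagonalizes vK v)
    (hbot : ∀ i, v (b i) ≠ ⊥) (x : σ → L) :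
    extendedValuation vL v x = (b.extendScalarsPi L).diagonalValuation vL (fun i => v (b i)) x := by
  refine le_antisymm (sSup_le ?_) (le_sSup ?_)
  · rintro _ ⟨N, c, y, rfl, rfl⟩
    refine le_iInf fun i => ?_
    rw [extendScalarsPi_repr_sum]
    refine Finset.sum_induction _ (fun z => _ ≤ vL z + v (b i)) (fun z₁ z₂ h₁ h₂ => ?_) ?_
      fun j _ => ?_
    · calc _ ≤ min (vL z₁) (vL z₂) + v (b i) :=
            (min_add_add_right (vL z₁) (vL z₂) (v (b i))).symm ▸ le_min h₁ h₂
        _ ≤ vL (z₁ + z₂) + v (b i) := add_le_add_left (haddL _ _) _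
    · rw [h0L, EReal.top_add_of_ne_bot (hbot i)]
      exact le_top
    · calc _ ≤ vL (c j) + v (y j) := iInf_le _ j
        _ ≤ vL (c j) + (vK (b.repr (y j) i) + v (b i)) :=
          add_le_add_right ((hdiag.apply_eq (y j)).trans_le (iInf_le _ i)) _
        _ = vL (c j * algebraMap K L (b.repr (y j) i)) + v (b i) := by
          rw [hmulL, hext, add_assoc]
  · let e := Fintype.equivFin σ
    refine ⟨Fintype.card σ, fun j => (b.extendScalarsPi L).repr x (e.symm j),
      fun j => b (e.symm j), ?_, ?_⟩
    · conv_lhs => rw [← (b.extendScalarsPi L).sum_repr x]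
      simp only [extendScalarsPi_apply]
      exact (e.symm.sum_comp _).symm
    · exact (e.symm.iInf_comp (g := fun i => vL ((b.extendScalarsPi L).repr x i) + v (b i))).symm

end ExtendedValuation

theorem stmt8_general {K L : Type*} [Field K] [Field L] [Algebra K L]
    (n : ℕ) (vK : K → EReal) (vL : L → EReal)
    (htopL : ∀ a : L, vL a = ⊤ ↔ a = 0)
    (hmulL : ∀ a b : L, vL (a * b) = vL a + vL b)
    (haddL : ∀ a b : L, min (vL a) (vL b) ≤ vL (a + b))
    (hext : ∀ a : K, vL (algebraMap K L a) = vK a)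
    (v : (Fin (n+1) → K) → EReal)
    (hv3 : ∀ x : Fin (n+1) → K, v x = ⊤ ↔ x = 0)
    (b : Module.Basis (Fin (n+1)) K (Fin (n+1) → K))
    (hdiag : ∀ a : Fin (n+1) → K,
      v (∑ i, a i • b i) = ⨅ i, (vK (a i) + v (b i)))
    (vt : (Fin (n+1) → L) → EReal)
    (hvt : ∀ x : Fin (n+1) → L,
      vt x = sSup {r : EReal |
        ∃ (N : ℕ) (c : Fin N → L) (y : Fin N → (Fin (n+1) → K)),
          x = ∑ j, c j • (fun s => algebraMap K L (y j s)) ∧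
          r = ⨅ j, (vL (c j) + v (y j))}) :
    (∀ x y : Fin (n+1) → L, min (vt x) (vt y) ≤ vt (x + y)) ∧
    (∀ (c : L) (x : Fin (n+1) → L), vt (c • x) = vL c + vt x) ∧
    (∀ x : Fin (n+1) → L, vt x = ⊤ ↔ x = 0) ∧
    (∀ x : Fin (n+1) → K, vt (fun s => algebraMap K L (x s)) = v x) ∧
    (∀ a : Fin (n+1) → L,
      vt (∑ i, a i • (fun s => algebraMap K L (b i s))) = ⨅ i, (vL (a i) + v (b i))) := by
  have hdiag : b.Diagonalizes vK v := hdiag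
  have hbot : ∀ i, v (b i) ≠ ⊥ := hdiag.apply_ne_bot ((hv3 0).2 rfl)
  have htop : ∀ i, v (b i) ≠ ⊤ := fun i h => b.ne_zero i ((hv3 _).1 h)
  have hvt : vt = (b.extendScalarsPi L).diagonalValuation vL (fun i => v (b i)) :=
    funext fun x => (hvt x).trans <|
      extendedValuation_eq_diagonalValuation hmulL haddL ((htopL 0).2 rfl) hext hdiag hbot x
  subst hvt
  refine ⟨min_le_diagonalValuation_add haddL, diagonalValuation_smul hmulL,
    diagonalValuation_eq_top_iff htopL htop hbot, diagonalValuation_algebraMap hext hdiag,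
    fun a => ?_⟩
  simp only [← extendScalarsPi_apply, diagonalValuation_sum_smul]

/-- Proposition 3.5 of the paper: canonical extension of a diagonalizable valuation under
base change.  Let `K` be complete with respect to a nontrivial discrete additive valuation
`vK`, `L/K` a finite extension and `vL` an additive valuation on `L` extending `vK`.
Let `v` be a `vK`-valuation on `V = K^{n+1}` diagonalized by a basis `b`, and let
`ṽ(x) := sup` over all finite representations `x = ∑_j c_j • y_j` (`c_j ∈ L`, `y_j ∈ V`)
of `min_j (vL(c_j) + v(y_j))`.  Then `ṽ` is a `vL`-valuation on `L^{n+1}` restricting to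
`v` on `V`, and the basis `b` diagonalizes `ṽ`. -/
theorem stmt8 {K L : Type*} [Field K] [Field L] [Algebra K L] [FiniteDimensional K L]
    (n : ℕ) (vK : K → EReal) (vL : L → EReal)
    (htopK : ∀ a : K, vK a = ⊤ ↔ a = 0)
    (hbotK : ∀ a : K, vK a ≠ ⊥)
    (hmulK : ∀ a b : K, vK (a * b) = vK a + vK b)
    (haddK : ∀ a b : K, min (vK a) (vK b) ≤ vK (a + b))
    (hdisc : ∃ c : ℝ, 0 < c ∧ ∀ a : K, a ≠ 0 → ∃ k : ℤ, vK a = (((k : ℝ) * c : ℝ) : EReal))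
    (hnontriv : ∃ a : K, a ≠ 0 ∧ vK a ≠ 0)
    (hcomplete : ∀ a : ℕ → K,
      (∀ M : ℝ, ∃ N : ℕ, ∀ m ≥ N, ∀ p ≥ N, (M : EReal) ≤ vK (a m - a p)) →
      ∃ l : K, ∀ M : ℝ, ∃ N : ℕ, ∀ p ≥ N, (M : EReal) ≤ vK (a p - l))
    (htopL : ∀ a : L, vL a = ⊤ ↔ a = 0)
    (hbotL : ∀ a : L, vL a ≠ ⊥)
    (hmulL : ∀ a b : L, vL (a * b) = vL a + vL b)
    (haddL : ∀ a b : L, min (vL a) (vL b) ≤ vL (a + b))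
    (hext : ∀ a : K, vL (algebraMap K L a) = vK a)
    (v : (Fin (n+1) → K) → EReal)
    (hv1 : ∀ x y : Fin (n+1) → K, min (v x) (v y) ≤ v (x + y))
    (hv2 : ∀ (c : K) (x : Fin (n+1) → K), v (c • x) = vK c + v x)
    (hv3 : ∀ x : Fin (n+1) → K, v x = ⊤ ↔ x = 0)
    (b : Module.Basis (Fin (n+1)) K (Fin (n+1) → K))
    (hdiag : ∀ a : Fin (n+1) → K,
      v (∑ i, a i • b i) = ⨅ i, (vK (a i) + v (b i)))
    (vt : (Fin (n+1) → L) → EReal)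
    (hvt : ∀ x : Fin (n+1) → L,
      vt x = sSup {r : EReal |
        ∃ (N : ℕ) (c : Fin N → L) (y : Fin N → (Fin (n+1) → K)),
          x = ∑ j, c j • (fun s => algebraMap K L (y j s)) ∧
          r = ⨅ j, (vL (c j) + v (y j))}) :
    (∀ x y : Fin (n+1) → L, min (vt x) (vt y) ≤ vt (x + y)) ∧
    (∀ (c : L) (x : Fin (n+1) → L), vt (c • x) = vL c + vt x) ∧
    (∀ x : Fin (n+1) → L, vt x = ⊤ ↔ x = 0) ∧
    (∀ x : Fin (n+1) → K, vt (fun s => algebraMap K L (x s)) = v x) ∧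
    (∀ a : Fin (n+1) → L,
      vt (∑ i, a i • (fun s => algebraMap K L (b i s))) = ⨅ i, (vL (a i) + v (b i))) :=
  stmt8_general n vK vL htopL hmulL haddL hext v hv3 b hdiag vt hvt
end

section
/- Fix integers n ≥ 1 and d ≥ 1, let I_d := {i : Fin (n+1) → ℕ | ∑_j i_j = d}, and for i ∈ I_d define l_i : ℝ^{n+1} → ℝ by l_i(w) := (d/(n+1))·(∑_j w_j) − ∑_j i_j·w_j. Let I ⊆ I_d be nonempty and c : I → ℝ. Suppose that for every nonzero w ∈ ℝ^{n+1} with ∑_j w_j = 0 there exists i ∈ I with ∑_j i_j·w_j > 0. Then the function φ(w) := max_{i ∈ I} (l_i(w) − c_i) is radially unbounded on the hyperplane H := {w ∈ ℝ^{n+1} : ∑_j w_j = 0}: for every sequence (w_k) in H with ‖w_k‖ → ∞, one has φ(w_k) → ∞. -/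
/-!
The gauge `g w = max_{i ∈ I} (-∑ j, i j * w j)` is a finite maximum of linear functionals, and
the hypothesis applied to `-w` makes it positive at every nonzero point of `H`. Its minimum `ε`
on the compact unit sphere of `H` is therefore positive, and homogeneity gives `ε * ‖w‖ ≤ g w`
on all of `H`. On `H` the term `(d / (n + 1)) * ∑ j, w j` vanishes, so
`φ w ≥ g w - max_{i ∈ I} c i ≥ ε * ‖w‖ - max_{i ∈ I} c i`.
-/

open Filter Metric

theorem Finset.sup'_sub_sup'_le_sup'_sub {ι α : Type*} [AddCommGroup α] [LinearOrder α]
    [IsOrderedAddMonoid α] {s : Finset ι} (hs : s.Nonempty) (f g : ι → α) :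
    s.sup' hs f - s.sup' hs g ≤ s.sup' hs (fun i => f i - g i) := by
  obtain ⟨i, hi, hfi⟩ := s.exists_mem_eq_sup' hs f
  calc s.sup' hs f - s.sup' hs g ≤ f i - g i := hfi ▸ sub_le_sub_left (s.le_sup' g hi) _
    _ ≤ s.sup' hs (fun i => f i - g i) := s.le_sup' (fun i => f i - g i) hi

theorem exists_pos_mul_norm_le_sup'_of_isClosed_cone {E ι : Type*} [NormedAddCommGroup E]
    [NormedSpace ℝ E] [ProperSpace E] {K : Set E} (hK : IsClosed K)
    (hcone : ∀ v ∈ K, ∀ t : ℝ, 0 < t → t • v ∈ K) {s : Finset ι} (hs : s.Nonempty)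
    (f : ι → E →L[ℝ] ℝ) (hpos : ∀ v ∈ K, v ≠ 0 → ∃ i ∈ s, 0 < f i v) :
    ∃ ε > 0, ∀ v ∈ K, ε * ‖v‖ ≤ s.sup' hs (fun i => f i v) := by
  have hcont : Continuous fun v => s.sup' hs (fun i => f i v) :=
    Continuous.finset_sup'_apply hs fun i _ => (f i).continuous
  have hposS : ∀ u ∈ K ∩ sphere 0 1, 0 < s.sup' hs (fun i => f i u) := by
    rintro u ⟨huK, hu⟩
    obtain ⟨i, hi, hfi⟩ := hpos u huK (ne_zero_of_mem_unit_sphere ⟨u, hu⟩)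
    exact hfi.trans_le (s.le_sup' (fun i => f i u) hi)
  obtain ⟨ε, hε, hεS⟩ := ((isCompact_sphere (0 : E) 1).inter_left hK).exists_forall_le'
    hcont.continuousOn hposS
  refine ⟨ε, hε, fun v hv => ?_⟩
  rcases eq_or_ne v 0 with rfl | hv0
  · simp
  have hnv : 0 < ‖v‖ := norm_pos_iff.mpr hv0
  obtain ⟨i, hi, hfi⟩ := s.exists_mem_eq_sup' hs (fun i => f i (‖v‖⁻¹ • v))
  have hunit : ε ≤ ‖v‖⁻¹ * f i v := by
    have h := hεS _ ⟨hcone v hv _ (inv_pos.mpr hnv), by simp [norm_smul, hnv.ne']⟩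
    rwa [hfi, map_smul, smul_eq_mul] at h
  calc ε * ‖v‖ ≤ f i v := by rwa [le_inv_mul_iff₀ hnv, mul_comm] at hunit
    _ ≤ s.sup' hs (fun i => f i v) := s.le_sup' (fun i => f i v) hi

theorem stmt11_general (n d : ℕ)
    (I : Finset (Fin (n+1) → ℕ)) (hI : I.Nonempty)
    (c : (Fin (n+1) → ℕ) → ℝ)
    (hstab : ∀ w : EuclideanSpace ℝ (Fin (n+1)), w ≠ 0 → (∑ j, w j) = 0 →
      ∃ i ∈ I, 0 < ∑ j, (i j : ℝ) * w j) :
    ∀ wseq : ℕ → EuclideanSpace ℝ (Fin (n+1)),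
      (∀ k, (∑ j, wseq k j) = 0) →
      Filter.Tendsto (fun k => ‖wseq k‖) Filter.atTop Filter.atTop →
      Filter.Tendsto (fun k => I.sup' hI fun i =>
          ((d : ℝ) / (n+1)) * (∑ j, wseq k j) - (∑ j, (i j : ℝ) * wseq k j) - c i)
        Filter.atTop Filter.atTop := by
  intro wseq hbal hnorm
  obtain ⟨ε, hε, hgrow⟩ := exists_pos_mul_norm_le_sup'_of_isClosed_cone
    (K := {w : EuclideanSpace ℝ (Fin (n+1)) | ∑ j, w j = 0})
    (isClosed_eq (by fun_prop) continuous_const) (fun v hv t _ => by simp_all [← Finset.mul_sum])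
    hI (fun i => -∑ j, (i j : ℝ) • EuclideanSpace.proj j) fun v hv hv0 => by
      obtain ⟨i, hi, hiv⟩ := hstab (-v) (neg_ne_zero.mpr hv0) (by simp_all)
      exact ⟨i, hi, by simpa using hiv⟩
  refine tendsto_atTop_mono (fun k => ?_)
    (tendsto_atTop_add_const_right _ (-I.sup' hI c) (hnorm.const_mul_atTop hε))
  calc ε * ‖wseq k‖ + -I.sup' hI c
      ≤ I.sup' hI (fun i => -∑ j, (i j : ℝ) * wseq k j) - I.sup' hI c := by
        simpa [sub_eq_add_neg] using hgrow _ (hbal k)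
    _ ≤ I.sup' hI (fun i => -∑ j, (i j : ℝ) * wseq k j - c i) :=
        Finset.sup'_sub_sup'_le_sup'_sub hI _ c
    _ = _ := by simp [hbal k]

/-- Core of Lemma 4.6(iii) of the paper: if for every nonzero balanced `w` some exponent
vector `i ∈ I` satisfies `∑_j i_j·w_j > 0` (the numerical criterion for stability), then
`φ(w) = max_{i ∈ I}(l_i(w) − c_i)` is radially unbounded on the balanced hyperplane
`H = {w : ∑_j w_j = 0}`: along every sequence in `H` with `‖w_k‖ → ∞` one has
`φ(w_k) → ∞`. -/
theorem stmt11 (n d : ℕ) (hn : 1 ≤ n) (hd : 1 ≤ d)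
    (I : Finset (Fin (n+1) → ℕ)) (hI : I.Nonempty)
    (hdeg : ∀ i ∈ I, (∑ j, i j) = d)
    (c : (Fin (n+1) → ℕ) → ℝ)
    (hstab : ∀ w : EuclideanSpace ℝ (Fin (n+1)), w ≠ 0 → (∑ j, w j) = 0 →
      ∃ i ∈ I, 0 < ∑ j, (i j : ℝ) * w j) :
    ∀ wseq : ℕ → EuclideanSpace ℝ (Fin (n+1)),
      (∀ k, (∑ j, wseq k j) = 0) →
      Filter.Tendsto (fun k => ‖wseq k‖) Filter.atTop Filter.atTop →
      Filter.Tendsto (fun k => I.sup' hI fun i =>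
          ((d : ℝ) / (n+1)) * (∑ j, wseq k j) - (∑ j, (i j : ℝ) * wseq k j) - c i)
        Filter.atTop Filter.atTop :=
  stmt11_general n d I hI c hstab
end

section
/- Let I be a nonempty finite set and a, c : I → ℝ. Define f : ℝ → ℝ by f(t) := max_{i ∈ I} (a_i·t − c_i), set m := min_{i ∈ I} c_i and Ī := {i ∈ I : c_i = m}. Then the following are equivalent: (1) there exists i ∈ Ī with a_i ≥ 0; (2) f is monotone nondecreasing on [0, ∞); (3) there exists ε > 0 such that f is monotone nondecreasing on [0, ε). -/
/-- One-variable analytic core of Lemma 4.8 of the paper.  For a nonempty finite index set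
`I` and `f(t) = max_{i ∈ I}(a_i·t − c_i)`, with `m = min_i c_i` and `Ī = {i : c_i = m}`,
the following are equivalent: (1) some `i ∈ Ī` has `a_i ≥ 0`; (2) `f` is nondecreasing on
`[0,∞)`; (3) `f` is nondecreasing on `[0,ε)` for some `ε > 0`. -/
theorem stmt12 {ι : Type*} [Fintype ι] [Nonempty ι] (a c : ι → ℝ) :
    ((∃ i : ι, c i = Finset.univ.inf' Finset.univ_nonempty c ∧ 0 ≤ a i) ↔
      MonotoneOn
        (fun t : ℝ => Finset.univ.sup' Finset.univ_nonempty fun i => a i * t - c i)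
        (Set.Ici (0 : ℝ))) ∧
    (MonotoneOn
        (fun t : ℝ => Finset.univ.sup' Finset.univ_nonempty fun i => a i * t - c i)
        (Set.Ici (0 : ℝ)) ↔
      ∃ ε > (0 : ℝ), MonotoneOn
        (fun t : ℝ => Finset.univ.sup' Finset.univ_nonempty fun i => a i * t - c i)
        (Set.Ico (0 : ℝ) ε)) := by
  set m : ℝ := Finset.univ.inf' Finset.univ_nonempty c with hm
  set f : ℝ → ℝ :=
    fun t : ℝ => Finset.univ.sup' Finset.univ_nonempty fun i => a i * t - c i with hf
  have hfle : ∀ (i : ι) (t : ℝ), a i * t - c i ≤ f t := fun i t =>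
    Finset.le_sup' (fun i => a i * t - c i) (Finset.mem_univ i)
  have hmle : ∀ i : ι, m ≤ c i := fun i => Finset.inf'_le c (Finset.mem_univ i)
  -- (1) → (2)
  have h12 : (∃ i : ι, c i = m ∧ 0 ≤ a i) → MonotoneOn f (Set.Ici 0) := by
    rintro ⟨i, hci, hai⟩ s hs t ht hst
    simp only [Set.mem_Ici] at hs ht
    obtain ⟨j, -, hj⟩ :=
      Finset.exists_mem_eq_sup' (Finset.univ_nonempty (α := ι)) (fun i => a i * s - c i)
    have hfs : f s = a j * s - c j := hj
    rw [hfs]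
    rcases le_or_gt 0 (a j) with h | h
    · exact le_trans (by nlinarith) (hfle j t)
    · have h1 : a j * s ≤ 0 := mul_nonpos_of_nonpos_of_nonneg h.le hs
      have h2 : 0 ≤ a i * t := mul_nonneg hai ht
      have h3 := hmle j
      exact le_trans (by linarith) (hfle i t)
  -- (2) → (3)
  have h23 : MonotoneOn f (Set.Ici 0) →
      ∃ ε > (0 : ℝ), MonotoneOn f (Set.Ico (0 : ℝ) ε) := by
    intro h
    exact ⟨1, one_pos, h.mono (fun x hx => hx.1)⟩
  -- (3) → (1)
  have h31 : (∃ ε > (0 : ℝ), MonotoneOn f (Set.Ico (0 : ℝ) ε)) →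
      ∃ i : ι, c i = m ∧ 0 ≤ a i := by
    rintro ⟨ε, hε, hmono⟩
    by_contra hne
    push_neg at hne
    set T : ι → ℝ := fun i => if c i = m ∨ a i ≤ 0 then ε / 2 else (c i - m) / (2 * a i)
      with hT
    set t := min (ε / 2) (Finset.univ.inf' Finset.univ_nonempty T) with ht
    have hTpos : ∀ i, 0 < T i := by
      intro i
      rw [hT]; dsimp only
      split_ifs with h
      · linarith
      · push_neg at h
        have h1 : m < c i := lt_of_le_of_ne (hmle i) (Ne.symm h.1)
        have h2 : 0 < a i := h.2
        exact div_pos (by linarith) (by linarith)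
    have htpos : 0 < t :=
      lt_min (by linarith)
        ((Finset.lt_inf'_iff _).2 fun i _ => hTpos i)
    have htT : ∀ i, t ≤ T i := fun i =>
      (min_le_right _ _).trans (Finset.inf'_le T (Finset.mem_univ i))
    have hkey : ∀ i, a i * t - c i < -m := by
      intro i
      by_cases hc : c i = m
      · have hai := hne i hc
        nlinarith
      · have hmi : m < c i := lt_of_le_of_ne (hmle i) (Ne.symm hc)
        by_cases ha : a i ≤ 0
        · have : a i * t ≤ 0 := mul_nonpos_of_nonpos_of_nonneg ha htpos.le
          linarith
        · push_neg at ha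
          have hTi : T i = (c i - m) / (2 * a i) := by
            rw [hT]; dsimp only; rw [if_neg]; push_neg; exact ⟨hc, ha⟩
          have h4 : t ≤ (c i - m) / (2 * a i) := hTi ▸ htT i
          rw [le_div_iff₀ (by linarith : (0:ℝ) < 2 * a i)] at h4
          nlinarith
    have hflt : f t < -m := by
      rw [hf]
      exact (Finset.sup'_lt_iff _).2 fun i _ => hkey i
    obtain ⟨j, -, hj⟩ := Finset.exists_mem_eq_inf' (Finset.univ_nonempty (α := ι)) c
    have hj' : m = c j := hj
    have hf0 : -m ≤ f 0 := by
      have := hfle j 0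
      rw [mul_zero, zero_sub, ← hj'] at this
      exact this
    have := hmono (Set.mem_Ico.2 ⟨le_refl 0, hε⟩)
      (Set.mem_Ico.2 ⟨htpos.le, lt_of_le_of_lt (min_le_left _ _) (by linarith)⟩) htpos.le
    linarith
  exact ⟨⟨h12, fun h => h31 (h23 h)⟩, ⟨h23, fun h => h12 (h31 h)⟩⟩
end

section
/- Let I be a nonempty finite set and a, c : I → ℝ. Define f : ℝ → ℝ by f(t) := max_{i ∈ I} (a_i·t − c_i), set m := min_{i ∈ I} c_i and Ī := {i ∈ I : c_i = m}. Then the following are equivalent: (1) there exists i ∈ Ī with a_i > 0; (2) there exists ε > 0 such that f is strictly increasing on [0, ε). -/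
/-!
Near `t = 0` only the indices minimising `c` can realise the maximum of the affine functions
`a i * t - c i`, and among those the one of largest slope wins for every `t ≥ 0`. So on some
interval `[0, ε)` the function coincides with a single affine function `a k * t - c k`, and it
is strictly increasing there exactly when that maximal active slope `a k` is positive.
-/

open Filter Topology Set

theorem exists_strictMonoOn_Ico_iff_of_eventuallyEq {f : ℝ → ℝ} {α β : ℝ}
    (hf : f =ᶠ[𝓝[≥] 0] fun t => α * t - β) :
    (∃ ε > 0, StrictMonoOn f (Ico 0 ε)) ↔ 0 < α := by
  obtain ⟨ε₀, hε₀ : 0 < ε₀, hsub⟩ := mem_nhdsGE_iff_exists_Ico_subset.1 hf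
  constructor
  · rintro ⟨ε, hε, hmono⟩
    obtain ⟨t, ht, htε, htε₀⟩ : ∃ t, 0 < t ∧ t < ε ∧ t < ε₀ :=
      ⟨min ε ε₀ / 2, by positivity, by linarith [min_le_left ε ε₀], by linarith [min_le_right ε ε₀]⟩
    have hlt : f 0 < f t := hmono ⟨le_rfl, hε⟩ ⟨ht.le, htε⟩ ht
    rw [hsub ⟨le_rfl, hε₀⟩, hsub ⟨ht.le, htε₀⟩] at hlt
    nlinarith
  · intro hα
    refine ⟨ε₀, hε₀, StrictMonoOn.congr ?_ fun t ht => (hsub ht).symm⟩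
    exact fun x _ y _ hxy => by gcongr

section

variable {ι : Type*} (s : Finset ι) (hs : s.Nonempty) (a c : ι → ℝ)

theorem Finset.exists_mem_inf'_eq_forall_le :
    ∃ k ∈ s, c k = s.inf' hs c ∧ ∀ i ∈ s, c i = s.inf' hs c → a i ≤ a k := by
  obtain ⟨j, hj, hcj⟩ := s.exists_mem_eq_inf' hs c
  have hne : (s.filter fun i => c i = s.inf' hs c).Nonempty := ⟨j, by simp [hj, hcj]⟩
  obtain ⟨k, hk, hmax⟩ := (s.filter fun i => c i = s.inf' hs c).exists_max_image a hne
  rw [Finset.mem_filter] at hk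
  exact ⟨k, hk.1, hk.2, fun i hi hci => hmax i (Finset.mem_filter.2 ⟨hi, hci⟩)⟩

theorem Finset.sup'_affine_eventuallyEq {k : ι} (hk : k ∈ s) (hck : c k = s.inf' hs c)
    (hak : ∀ i ∈ s, c i = s.inf' hs c → a i ≤ a k) :
    (fun t => s.sup' hs fun i => a i * t - c i) =ᶠ[𝓝[≥] 0] fun t => a k * t - c k := by
  suffices h : ∀ᶠ t in 𝓝[≥] (0 : ℝ), ∀ i ∈ s, a i * t - c i ≤ a k * t - c k by
    filter_upwards [h] with t ht
    exact le_antisymm (Finset.sup'_le hs _ ht) (Finset.le_sup' (fun i => a i * t - c i) hk)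
  refine (eventually_all_finset s).2 fun i hi => ?_
  rcases (s.inf'_le c hi).eq_or_lt with hci | hci
  · filter_upwards [self_mem_nhdsWithin] with t (ht : 0 ≤ t)
    have : a i * t ≤ a k * t := by gcongr; exact hak i hi hci.symm
    linarith
  · -- an inactive index loses at `t = 0`, hence also for `t` near `0`
    have hlim : Tendsto (fun t : ℝ => (a i - a k) * t) (𝓝 0) (𝓝 0) :=
      (by fun_prop : Continuous fun t : ℝ => (a i - a k) * t).tendsto' 0 0 (mul_zero _)
    filter_upwards [nhdsWithin_le_nhds (hlim.eventually (eventually_lt_nhds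
      (show (0 : ℝ) < c i - c k by linarith)))] with t ht
    linarith

end

/-- Strict version of the one-variable analytic core of Lemma 4.8 of the paper.  For a
nonempty finite index set `I` and `f(t) = max_{i ∈ I}(a_i·t − c_i)`, with `m = min_i c_i`
and `Ī = {i : c_i = m}`, the following are equivalent: (1) some `i ∈ Ī` has `a_i > 0`;
(2) `f` is strictly increasing on `[0,ε)` for some `ε > 0`. -/
theorem stmt13 {ι : Type*} [Fintype ι] [Nonempty ι] (a c : ι → ℝ) :
    (∃ i : ι, c i = Finset.univ.inf' Finset.univ_nonempty c ∧ 0 < a i) ↔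
      ∃ ε > (0 : ℝ), StrictMonoOn
        (fun t : ℝ => Finset.univ.sup' Finset.univ_nonempty fun i => a i * t - c i)
        (Set.Ico (0 : ℝ) ε) := by
  obtain ⟨k, hk, hck, hak⟩ := Finset.univ.exists_mem_inf'_eq_forall_le Finset.univ_nonempty a c
  rw [exists_strictMonoOn_Ico_iff_of_eventuallyEq
    (Finset.univ.sup'_affine_eventuallyEq Finset.univ_nonempty a c hk hck hak)]
  exact ⟨fun ⟨i, hci, hai⟩ => hai.trans_le (hak i (Finset.mem_univ i) hci), fun h => ⟨k, hck, h⟩⟩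
end

section
/- The function f : ℝ² → ℝ defined by f(w₀, w₁) := max(w₁ − w₀, w₀ − 2·w₁, w₀ + w₁ − 1) attains the value −1/6 at the point (1/2, 1/3), and f(w₀, w₁) > −1/6 for every (w₀, w₁) ≠ (1/2, 1/3); that is, f has the unique global minimum −1/6 attained exactly at (1/2, 1/3). -/
/-- Computation from Section 6.1 of the paper: the restriction of the stability function
of the cubic `x₀²x₂ − x₁³ + 2x₂³` to the standard apartment,
`f(w₀,w₁) = max(w₁ − w₀, w₀ − 2w₁, w₀ + w₁ − 1)`, has the unique global minimum `−1/6`,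
attained exactly at `(1/2, 1/3)`. -/
theorem stmt15 :
    max (max ((1/3 : ℝ) - 1/2) (1/2 - 2 * (1/3))) (1/2 + 1/3 - 1) = -1/6 ∧
    ∀ w0 w1 : ℝ, (w0, w1) ≠ ((1/2 : ℝ), (1/3 : ℝ)) →
      -1/6 < max (max (w1 - w0) (w0 - 2 * w1)) (w0 + w1 - 1) := by
  constructor
  · norm_num
  · intro w0 w1 h
    by_contra h'
    push_neg at h'
    rw [max_le_iff, max_le_iff] at h'
    obtain ⟨⟨h1, h2⟩, h3⟩ := h'
    have hw1 : w1 = 1/3 := by linarith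
    have hw0 : w0 = 1/2 := by linarith
    exact h (by rw [hw0, hw1])
end

section
/- For t ∈ ℝ define g_t : ℝ² → ℝ by g_t(w₀, w₁) := max(w₁ − w₀, w₁ − 1, w₀ − 2·w₁, w₀ + w₁ − t). If 0 < t < 2, then g_t attains the value −t/6 at (t/2, t/3) and g_t(w₀, w₁) > −t/6 for all (w₀, w₁) ≠ (t/2, t/3). If t ≥ 2, then g_t attains the value −1/3 at (1, 2/3) and g_t(w₀, w₁) > −1/3 for all (w₀, w₁) ≠ (1, 2/3). -/
/-- Second apartment computation from Section 6.1 of the paper: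
`g_t(w₀,w₁) = max(w₁ − w₀, w₁ − 1, w₀ − 2w₁, w₀ + w₁ − t)`.  For `0 < t < 2` its unique
global minimum is `−t/6`, attained exactly at `(t/2, t/3)`; for `t ≥ 2` its unique global
minimum is `−1/3`, attained exactly at `(1, 2/3)`. -/
theorem stmt16 (t : ℝ) :
    (0 < t → t < 2 →
      (max (max (max (t/3 - t/2) (t/3 - 1)) (t/2 - 2 * (t/3))) (t/2 + t/3 - t) = -t/6 ∧
      ∀ w0 w1 : ℝ, (w0, w1) ≠ (t/2, t/3) →
        -t/6 < max (max (max (w1 - w0) (w1 - 1)) (w0 - 2 * w1)) (w0 + w1 - t))) ∧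
    (2 ≤ t →
      (max (max (max ((2/3 : ℝ) - 1) (2/3 - 1)) (1 - 2 * (2/3))) (1 + 2/3 - t) = -1/3 ∧
      ∀ w0 w1 : ℝ, (w0, w1) ≠ ((1 : ℝ), (2/3 : ℝ)) →
        -1/3 < max (max (max (w1 - w0) (w1 - 1)) (w0 - 2 * w1)) (w0 + w1 - t))) := by
  constructor
  · intro h0 h2
    constructor
    · refine le_antisymm ?_ ?_
      · simp only [max_le_iff]
        exact ⟨⟨⟨by linarith, by linarith⟩, by linarith⟩, by linarith⟩
      · calc -t/6 = t/2 + t/3 - t := by ring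
          _ ≤ _ := le_max_right _ _
    · intro w0 w1 hne
      by_contra h
      push_neg at h
      simp only [max_le_iff] at h
      obtain ⟨⟨⟨h1, h2'⟩, h3⟩, h4⟩ := h
      have hw0 : w0 = t/2 := by linarith
      have hw1 : w1 = t/3 := by linarith
      exact hne (by rw [hw0, hw1])
  · intro ht
    constructor
    · refine le_antisymm ?_ ?_
      · simp only [max_le_iff]
        exact ⟨⟨⟨by norm_num, by norm_num⟩, by norm_num⟩, by linarith⟩
      · calc (-1/3 : ℝ) = 1 - 2 * (2/3) := by norm_num
          _ ≤ _ := le_max_of_le_left (le_max_right _ _)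
    · intro w0 w1 hne
      by_contra h
      push_neg at h
      simp only [max_le_iff] at h
      obtain ⟨⟨⟨h1, h2'⟩, h3⟩, h4⟩ := h
      have hw1 : w1 = 2/3 := by linarith
      have hw0 : w0 = 1 := by linarith
      exact hne (by rw [hw0, hw1])
end
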